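/- arXiv:math/0305419 — 7 statements merged into one kernel-verified Lean document; each statement's English description precedes it below -/
import Mathlib

section
/- Let a = (a_k) be a sequence of complex numbers with a_1 = 0, let x and u be formal variables (or complex numbers with appropriate convergence). Then 1 + 2 * ∑_{r≥1} ( ∏_{j=1}^{r} (x - a_j) ) / ( ∏_{j=2}^{r+1} (u - a_j) ) = (u + x)/(u - x), as an identity of formal power series in 1/u (equivalently, for each N, the partial telescoping identity holds: (u+x)/(u-x) - 1 - 2∑_{r=1}^{N} (x|a)^r/(u|τa)^r = 2(x|a)^{N+1}/((u-x)(u|τa)^N)). -/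
/-- Telescoping form of the generating identity
`1 + 2 ∑_{r≥1} (x|a)^r/(u|τa)^r = (u+x)/(u-x)` (with `a 1 = 0`):
for every `N`, the remainder after the `N`-th partial sum is
`2 (x|a)^{N+1} / ((u-x) (u|τa)^N)`. -/
theorem multiparameter_one_row_generating_telescoping
    (a : ℕ → ℂ) (ha : a 1 = 0) (x u : ℂ)
    (hux : u ≠ x) (hden : ∀ j, u ≠ a j) (N : ℕ) :
    (u + x) / (u - x) - 1 -
        2 * ∑ r ∈ Finset.Icc 1 N,
          (∏ j ∈ Finset.Icc 1 r, (x - a j)) / (∏ j ∈ Finset.Icc 2 (r + 1), (u - a j))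
      = 2 * (∏ j ∈ Finset.Icc 1 (N + 1), (x - a j)) /
          ((u - x) * ∏ j ∈ Finset.Icc 2 (N + 1), (u - a j)) := by
  have hux' : u - x ≠ 0 := sub_ne_zero.mpr hux
  have hQ : ∀ n : ℕ, (∏ j ∈ Finset.Icc 2 n, (u - a j)) ≠ 0 := by
    intro n
    exact Finset.prod_ne_zero_iff.mpr fun j _ => sub_ne_zero.mpr (hden j)
  induction N with
  | zero =>
      simp only [Finset.Icc_self, Finset.Icc_eq_empty_of_lt (by norm_num : (0:ℕ) < 1),
        Finset.sum_empty, mul_zero, sub_zero, Finset.prod_singleton, ha, sub_zero]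
      have h2 : Finset.Icc 2 1 = (∅ : Finset ℕ) := by decide
      rw [h2, Finset.prod_empty, mul_one]
      field_simp
      ring
  | succ n ih =>
      rw [Finset.sum_Icc_succ_top (by omega : 1 ≤ n + 1)]
      have hP2 : (∏ j ∈ Finset.Icc 1 (n + 2), (x - a j))
          = (∏ j ∈ Finset.Icc 1 (n + 1), (x - a j)) * (x - a (n + 2)) :=
        Finset.prod_Icc_succ_top (by omega) _
      have hQ2 : (∏ j ∈ Finset.Icc 2 (n + 2), (u - a j))
          = (∏ j ∈ Finset.Icc 2 (n + 1), (u - a j)) * (u - a (n + 2)) :=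
        Finset.prod_Icc_succ_top (by omega) _
      have key : (u + x) / (u - x) - 1 -
          2 * (∑ r ∈ Finset.Icc 1 n,
            (∏ j ∈ Finset.Icc 1 r, (x - a j)) / (∏ j ∈ Finset.Icc 2 (r + 1), (u - a j))
            + (∏ j ∈ Finset.Icc 1 (n + 1), (x - a j)) /
              (∏ j ∈ Finset.Icc 2 (n + 2), (u - a j)))
          = 2 * (∏ j ∈ Finset.Icc 1 (n + 1), (x - a j)) /
              ((u - x) * ∏ j ∈ Finset.Icc 2 (n + 1), (u - a j))
            - 2 * (∏ j ∈ Finset.Icc 1 (n + 1), (x - a j)) /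
              (∏ j ∈ Finset.Icc 2 (n + 2), (u - a j)) := by
        rw [mul_add]; rw [← ih]; ring
      rw [key, hP2, hQ2]
      have ha2 : u - a (n + 2) ≠ 0 := sub_ne_zero.mpr (hden _)
      rw [div_sub_div _ _ (mul_ne_zero hux' (hQ _)) (mul_ne_zero (hQ _) ha2),
        div_eq_div_iff (mul_ne_zero (mul_ne_zero hux' (hQ _)) (mul_ne_zero (hQ _) ha2))
          (mul_ne_zero hux' (mul_ne_zero (hQ _) ha2))]
      ring
end

section
/- Let r(x_1,…,x_l) be a polynomial and for n ≥ l define R_n(x_1,…,x_n) = r(x_1,…,x_l) · ∏_{i≤l, i<j≤n} (x_i+x_j)/(x_i−x_j), and let R̃_n(x_1,…,x_n) = ∑_{ω ∈ S(n)} R_n(x_{ω(1)},…,x_{ω(n)}). Then R̃_n is a polynomial in x_1,…,x_n of degree at most deg r. -/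
noncomputable section

abbrev K (n : ℕ) : Type := FractionRing (MvPolynomial (Fin n) ℂ)

def Xv {n : ℕ} (i : Fin n) : K n :=
  algebraMap (MvPolynomial (Fin n) ℂ) (K n) (MvPolynomial.X i)

/-- The product over pairs `i < j` with `i < l` of `(x i + x j)/(x i - x j)`. -/
def ratioProd {n : ℕ} (l : ℕ) (x : Fin n → K n) : K n :=
  ∏ p ∈ Finset.univ.filter (fun p : Fin n × Fin n => (p.1 : ℕ) < l ∧ p.1 < p.2),
    (x p.1 + x p.2) / (x p.1 - x p.2)

/-- `R̃_n = ∑_{ω ∈ S(n)} r(x_{ω(1)},…,x_{ω(l)}) ∏_{i≤l, i<j≤n}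
(x_{ω(i)}+x_{ω(j)})/(x_{ω(i)}−x_{ω(j)})`, as a rational function. -/
def Rtilde (n l : ℕ) (hl : l ≤ n) (r : MvPolynomial (Fin l) ℂ) : K n :=
  ∑ ω : Equiv.Perm (Fin n),
    (MvPolynomial.eval₂
        ((algebraMap (MvPolynomial (Fin n) ℂ) (K n)).comp MvPolynomial.C)
        (fun i : Fin l => Xv (ω (Fin.castLE hl i))) r) *
      ratioProd l (fun j => Xv (ω j))

/-!
Multiplying by the Vandermonde determinant `V = ∏_{i<j} (x_j - x_i)` clears every denominator:
`Q = V · R_n` is a polynomial of degree at most `deg r + deg V`, and `V · R̃_n` is the alternant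
`∑_ω sign(ω) · ω(Q)`. An alternating polynomial vanishes on `x_a = x_b`, so it is divisible by
each prime `x_b - x_a`, hence, these being pairwise non-associate, by `V`. The quotient is `R̃_n`,
and as `V` is homogeneous, its degree is at most `deg Q - deg V ≤ deg r`.
-/

open MvPolynomial Finset Equiv

namespace MvPolynomial

variable {σ R : Type*}

theorem apply_rename_eq_eval₂ {τ S : Type*} [CommSemiring R] [CommSemiring S]
    (f : MvPolynomial τ R →+* S) (g : σ → τ) (p : MvPolynomial σ R) :
    f (rename g p) = eval₂ (f.comp C) (fun i => f (X (g i))) p := by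
  conv_lhs => rw [← eval₂_eta (rename g p), eval₂_comp_left, eval₂_rename]
  rfl

section CommRing

variable [CommRing R]

theorem IsHomogeneous.totalDegree_le_of_mul_le [IsDomain R] {v q : MvPolynomial σ R} {d t : ℕ}
    (hv : v.IsHomogeneous d) (hv0 : v ≠ 0) (h : (v * q).totalDegree ≤ d + t) :
    q.totalDegree ≤ t := by
  rcases eq_or_ne q 0 with rfl | hq0
  · simp
  rw [totalDegree_mul_of_isDomain hv0 hq0, hv.totalDegree hv0] at h
  omega

variable [DecidableEq σ]

theorem X_sub_X_dvd_sub_rename (a b : σ) (p : MvPolynomial σ R) :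
    X b - X a ∣ p - rename (fun k => if k = b then a else k) p := by
  set I := Ideal.span {(X b - X a : MvPolynomial σ R)}
  have hmk : (Ideal.Quotient.mkₐ R I).comp (rename fun k => if k = b then a else k) =
      Ideal.Quotient.mkₐ R I := by
    refine algHom_ext fun k => ?_
    by_cases hk : k = b
    · subst hk
      simpa [Ideal.Quotient.eq] using I.neg_mem (Ideal.mem_span_singleton_self (X k - X a))
    · simp [hk]
  rw [← Ideal.mem_span_singleton, ← Ideal.Quotient.eq]
  exact (congrArg (fun f => f p) hmk).symm

theorem X_sub_X_dvd_of_rename_swap [IsDomain R] [CharZero R] {a b : σ} {p : MvPolynomial σ R}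
    (hp : rename (swap a b) p = -p) : X b - X a ∣ p := by
  -- the substitution `x_b ↦ x_a` is invariant under `swap a b`, so it sends `p` to its negative
  set f : σ → σ := fun k => if k = b then a else k
  have hf : f ∘ swap a b = f := by
    funext k
    by_cases hka : k = a <;> by_cases hkb : k = b <;> simp_all [f, swap_apply_of_ne_of_ne]
  have hzero : rename f p = 0 := by
    rw [← CharZero.eq_neg_self_iff]
    calc rename f p = rename f (rename (swap a b) p) := by rw [rename_rename, hf]
      _ = -rename f p := by rw [hp, map_neg]
  have hdvd : X b - X a ∣ p - rename f p := X_sub_X_dvd_sub_rename a b p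
  rwa [hzero, sub_zero] at hdvd

theorem prime_X_sub_X [IsDomain R] {a b : σ} (hab : a ≠ b) :
    Prime (X b - X a : MvPolynomial σ R) := by
  let e : MvPolynomial σ R ≃ₐ[R] MvPolynomial σ R :=
    AlgEquiv.ofAlgHom (aeval fun k => if k = b then X b - X a else X k)
      (aeval fun k => if k = b then X b + X a else X k)
      (algHom_ext fun k => by by_cases hk : k = b <;> simp [hk, hab])
      (algHom_ext fun k => by by_cases hk : k = b <;> simp [hk, hab])
  simpa [e] using (MulEquiv.prime_iff e.toMulEquiv).mpr (X_prime (R := R) (i := b))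

theorem not_X_sub_X_dvd [LinearOrder σ] [Nontrivial R] {a b c d : σ} (hab : a < b) (hcd : c < d)
    (hne : (a, b) ≠ (c, d)) : ¬ (X b - X a : MvPolynomial σ R) ∣ X d - X c := by
  intro hdvd
  have h := map_dvd (rename (R := R) fun k => if k = b then a else k) hdvd
  simp only [map_sub, rename_X, ↓reduceIte, ite_self, sub_self, zero_dvd_iff,
    sub_eq_zero] at h
  have := X_injective h
  split_ifs at this <;> grind

variable [Fintype σ]

def alternant (q : MvPolynomial σ R) : MvPolynomial σ R :=
  ∑ ω : Perm σ, Perm.sign ω • rename ω q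

theorem rename_alternant (τ : Perm σ) (q : MvPolynomial σ R) :
    rename τ (alternant q) = Perm.sign τ • alternant q := by
  simp only [alternant, map_sum, smul_sum, Units.smul_def, map_zsmul, rename_rename]
  refine Fintype.sum_equiv (Equiv.mulLeft τ) _ _ fun ω => ?_
  simp only [coe_mulLeft, Perm.sign_mul, Units.val_mul, mul_smul, Perm.coe_mul]
  rw [← mul_smul (τ.sign : ℤ), ← Units.val_mul, Int.units_mul_self, Units.val_one, one_smul]

theorem totalDegree_alternant_le (q : MvPolynomial σ R) :
    (alternant q).totalDegree ≤ q.totalDegree :=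
  totalDegree_finsetSum_le fun _ _ =>
    (totalDegree_smul_le _ _).trans (totalDegree_rename_le _ _)

end CommRing

end MvPolynomial

def ltPairs (n : ℕ) : Finset (Fin n × Fin n) := univ.filter fun p => p.1 < p.2

@[simp]
theorem mem_ltPairs {n : ℕ} {p : Fin n × Fin n} : p ∈ ltPairs n ↔ p.1 < p.2 := by
  simp [ltPairs]

section Vandermonde

variable {R : Type*} [CommRing R] {n : ℕ}

theorem Matrix.det_vandermonde_eq_prod_ltPairs (v : Fin n → R) :
    (Matrix.vandermonde v).det = ∏ p ∈ ltPairs n, (v p.2 - v p.1) := by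
  rw [Matrix.det_vandermonde, ltPairs, ← univ_product_univ, prod_filter, prod_product]
  refine prod_congr rfl fun i _ => ?_
  rw [← filter_lt_eq_Ioi, prod_filter]

theorem RingHom.map_det_vandermonde {S : Type*} [CommRing S] (f : R →+* S) (v : Fin n → R) :
    f (Matrix.vandermonde v).det = (Matrix.vandermonde (f ∘ v)).det := by
  simp [Matrix.det_vandermonde_eq_prod_ltPairs, map_prod]

namespace MvPolynomial

theorem rename_det_vandermonde_X (ω : Perm (Fin n)) :
    rename ω (Matrix.vandermonde (X : Fin n → MvPolynomial (Fin n) R)).det =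
      Perm.sign ω • (Matrix.vandermonde X).det := by
  rw [Units.smul_def, zsmul_eq_mul, ← Matrix.det_permute, ← AlgHom.coe_toRingHom,
    RingHom.map_det]
  congr 1
  ext i j
  simp [Matrix.vandermonde]

theorem isHomogeneous_det_vandermonde_X :
    (Matrix.vandermonde (X : Fin n → MvPolynomial (Fin n) R)).det.IsHomogeneous #(ltPairs n) := by
  rw [Matrix.det_vandermonde_eq_prod_ltPairs]
  simpa using IsHomogeneous.prod (ltPairs n) _ (fun _ => 1)
    fun q _ => (isHomogeneous_X R q.2).sub (isHomogeneous_X R q.1)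

theorem det_vandermonde_X_ne_zero [IsDomain R] :
    (Matrix.vandermonde (X : Fin n → MvPolynomial (Fin n) R)).det ≠ 0 :=
  Matrix.det_vandermonde_ne_zero_iff.mpr X_injective

theorem det_vandermonde_X_dvd_of_rename_swap [IsDomain R] [UniqueFactorizationMonoid R]
    [CharZero R] {p : MvPolynomial (Fin n) R}
    (hp : ∀ a b : Fin n, a ≠ b → rename (swap a b) p = -p) :
    (Matrix.vandermonde (X : Fin n → MvPolynomial (Fin n) R)).det ∣ p := by
  rw [Matrix.det_vandermonde_eq_prod_ltPairs]
  refine prod_dvd_of_isRelPrime (fun q hq q' hq' hne => ?_) fun q hq => ?_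
  · rw [mem_coe, mem_ltPairs] at hq hq'
    exact (prime_X_sub_X hq.ne).irreducible.isRelPrime_iff_not_dvd.mpr
      (not_X_sub_X_dvd hq hq' hne)
  · exact X_sub_X_dvd_of_rename_swap (hp _ _ (mem_ltPairs.mp hq).ne)

end MvPolynomial

end Vandermonde

def headPairs (n l : ℕ) : Finset (Fin n × Fin n) :=
  univ.filter fun p => (p.1 : ℕ) < l ∧ p.1 < p.2

theorem headPairs_subset_ltPairs (n l : ℕ) : headPairs n l ⊆ ltPairs n :=
  fun _ hp => mem_ltPairs.mpr (mem_filter.mp hp).2.2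

section RatioNumerator

variable {R S : Type*} [CommRing R] [CommRing S] {n : ℕ} (l : ℕ)

def ratioNumerator (x : Fin n → R) : R :=
  (∏ p ∈ headPairs n l, -(x p.1 + x p.2)) * ∏ p ∈ ltPairs n \ headPairs n l, (x p.2 - x p.1)

theorem map_ratioNumerator (f : R →+* S) (x : Fin n → R) :
    f (ratioNumerator l x) = ratioNumerator l (f ∘ x) := by
  simp [ratioNumerator, map_prod]

theorem isHomogeneous_ratioNumerator_X :
    (ratioNumerator l (X : Fin n → MvPolynomial (Fin n) R)).IsHomogeneous #(ltPairs n) := by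
  have h := (IsHomogeneous.prod (headPairs n l) _ (fun _ => 1)
    fun q _ => ((isHomogeneous_X R q.1).add (isHomogeneous_X R q.2)).neg).mul
    (IsHomogeneous.prod (ltPairs n \ headPairs n l) _ (fun _ => 1)
      fun q _ => (isHomogeneous_X R q.2).sub (isHomogeneous_X R q.1))
  simp only [sum_const, smul_eq_mul, mul_one] at h
  rwa [add_comm, card_sdiff_add_card_eq_card (headPairs_subset_ltPairs n l)] at h

end RatioNumerator

theorem det_vandermonde_mul_ratioProd {n : ℕ} (l : ℕ) {x : Fin n → K n}
    (hx : Function.Injective x) :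
    (Matrix.vandermonde x).det * ratioProd l x = ratioNumerator l x := by
  have hfactor : ∀ p ∈ headPairs n l,
      (x p.2 - x p.1) * ((x p.1 + x p.2) / (x p.1 - x p.2)) = -(x p.1 + x p.2) := by
    intro p hp
    have hne : x p.1 - x p.2 ≠ 0 := sub_ne_zero.mpr (hx.ne (mem_filter.mp hp).2.2.ne)
    rw [← neg_sub, neg_mul, mul_div_cancel₀ _ hne]
  rw [Matrix.det_vandermonde_eq_prod_ltPairs, ← prod_sdiff (headPairs_subset_ltPairs n l),
    mul_assoc, ratioProd, ← headPairs, ← prod_mul_distrib, prod_congr rfl hfactor,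
    ratioNumerator, mul_comm]

section ClearedR

variable {n l : ℕ}

-- `V · R_n` as a polynomial, by `det_vandermonde_mul_ratioProd`.
def clearedR (hl : l ≤ n) (r : MvPolynomial (Fin l) ℂ) : MvPolynomial (Fin n) ℂ :=
  rename (Fin.castLE hl) r * ratioNumerator l (X : Fin n → MvPolynomial (Fin n) ℂ)

theorem totalDegree_clearedR_le (hl : l ≤ n) (r : MvPolynomial (Fin l) ℂ) :
    (clearedR hl r).totalDegree ≤ #(ltPairs n) + r.totalDegree :=
  (totalDegree_mul _ _).trans <| add_comm (#(ltPairs n)) _ ▸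
    add_le_add (totalDegree_rename_le _ _) (isHomogeneous_ratioNumerator_X l).totalDegree_le

theorem algebraMap_sign_smul_rename_clearedR (hl : l ≤ n) (r : MvPolynomial (Fin l) ℂ)
    (ω : Perm (Fin n)) :
    algebraMap (MvPolynomial (Fin n) ℂ) (K n) (Perm.sign ω • rename ω (clearedR hl r)) =
      algebraMap (MvPolynomial (Fin n) ℂ) (K n) (Matrix.vandermonde (X (R := ℂ))).det *
        (eval₂ ((algebraMap (MvPolynomial (Fin n) ℂ) (K n)).comp C)
          (fun i : Fin l => Xv (ω (Fin.castLE hl i))) r * ratioProd l (fun j => Xv (ω j))) := by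
  let φ := algebraMap (MvPolynomial (Fin n) ℂ) (K n)
  let ψ : MvPolynomial (Fin n) ℂ →+* K n := φ.comp (rename ω).toRingHom
  have hψX : ψ ∘ X = fun j => Xv (ω j) := funext fun j => by simp [ψ, φ, Xv]
  have hinj : Function.Injective fun j => Xv (ω j) :=
    (IsFractionRing.injective _ (K n)).comp (X_injective.comp ω.injective)
  have hV : ψ (Matrix.vandermonde (X (R := ℂ))).det =
      Perm.sign ω • φ (Matrix.vandermonde (X (R := ℂ))).det := by
    simp [ψ, rename_det_vandermonde_X]
  have hr : ψ (rename (Fin.castLE hl) r) =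
      eval₂ (φ.comp C) (fun i : Fin l => Xv (ω (Fin.castLE hl i))) r := by
    change φ (rename ω (rename _ r)) = _
    rw [rename_rename, apply_rename_eq_eval₂]
    rfl
  calc φ (Perm.sign ω • rename ω (clearedR hl r))
      = Perm.sign ω • (ψ (rename (Fin.castLE hl) r) * ψ (ratioNumerator l X)) := by
        simp [clearedR, ψ, Units.smul_def]
    _ = Perm.sign ω • (ψ (rename (Fin.castLE hl) r) *
          (ψ (Matrix.vandermonde (X (R := ℂ))).det * ratioProd l (fun j => Xv (ω j)))) := by
        rw [map_ratioNumerator, hψX, ← det_vandermonde_mul_ratioProd l hinj,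
          RingHom.map_det_vandermonde, hψX]
    _ = _ := by
        rw [hV, hr, smul_mul_assoc, mul_smul_comm, smul_smul, Int.units_mul_self, one_smul]
        ring

theorem algebraMap_alternant_clearedR (hl : l ≤ n) (r : MvPolynomial (Fin l) ℂ) :
    algebraMap (MvPolynomial (Fin n) ℂ) (K n) (alternant (clearedR hl r)) =
      algebraMap (MvPolynomial (Fin n) ℂ) (K n) (Matrix.vandermonde (X (R := ℂ))).det *
        Rtilde n l hl r := by
  simp only [alternant, map_sum, Rtilde, mul_sum, algebraMap_sign_smul_rename_clearedR]

end ClearedR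

/-- The symmetrized rational function `R̃_n` is in fact a polynomial in
`x_1, …, x_n`, of total degree at most `deg r`. -/
theorem Rtilde_isPolynomial_of_degree_le
    (n l : ℕ) (hl : l ≤ n) (r : MvPolynomial (Fin l) ℂ) :
    ∃ p : MvPolynomial (Fin n) ℂ,
      algebraMap (MvPolynomial (Fin n) ℂ) (K n) p = Rtilde n l hl r ∧
        p.totalDegree ≤ r.totalDegree := by
  obtain ⟨p, hp⟩ : (Matrix.vandermonde (X (R := ℂ))).det ∣ alternant (clearedR hl r) :=
    det_vandermonde_X_dvd_of_rename_swap fun a b hab => by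
      rw [rename_alternant, Perm.sign_swap hab, Units.neg_smul, one_smul]
  have hV : algebraMap (MvPolynomial (Fin n) ℂ) (K n)
      (Matrix.vandermonde (X (R := ℂ))).det ≠ 0 :=
    (map_ne_zero_iff _ (IsFractionRing.injective _ _)).mpr det_vandermonde_X_ne_zero
  refine ⟨p, mul_left_cancel₀ hV ?_, ?_⟩
  · rw [← map_mul, ← hp, algebraMap_alternant_clearedR]
  · refine isHomogeneous_det_vandermonde_X.totalDegree_le_of_mul_le det_vandermonde_X_ne_zero ?_
    rw [← hp]
    exact (totalDegree_alternant_le _).trans (totalDegree_clearedR_le hl r)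
end
end

section
/- Let r(x_1,…,x_l) be a polynomial that is symmetric in two of its variables x_i, x_j (i ≠ j, i,j ≤ l). Define R̃_n(x_1,…,x_n) = ∑_{ω ∈ S(n)} r(x_{ω(1)},…,x_{ω(l)}) · ∏_{i≤l, i<j≤n} (x_{ω(i)}+x_{ω(j)})/(x_{ω(i)}−x_{ω(j)}). Then R̃_n = 0. -/
noncomputable section


noncomputable section

section SignLemma

variable {F : Type*} [Field F]

private lemma ratio_antisymm {n : ℕ} (y : Fin n → F) (a b : Fin n) :
    (y b + y a) / (y b - y a) = - ((y a + y b) / (y a - y b)) := by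
  rw [show y b - y a = -(y a - y b) by ring, div_neg, add_comm]

private lemma prod_swap_neg (n l : ℕ) (y : Fin n → F) (u v : Fin n)
    (hu : (u : ℕ) < l) (hv : (v : ℕ) < l) (huv : u < v) :
    ∏ p ∈ Finset.univ.filter (fun p : Fin n × Fin n => (p.1 : ℕ) < l ∧ p.1 < p.2),
      ((y (Equiv.swap u v p.1) + y (Equiv.swap u v p.2)) /
        (y (Equiv.swap u v p.1) - y (Equiv.swap u v p.2)))
      = - ∏ p ∈ Finset.univ.filter (fun p : Fin n × Fin n => (p.1 : ℕ) < l ∧ p.1 < p.2),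
          ((y p.1 + y p.2) / (y p.1 - y p.2)) := by
  classical
  set τ := Equiv.swap u v with hτ
  set S : Finset (Fin n × Fin n) :=
    Finset.univ.filter (fun p : Fin n × Fin n => (p.1 : ℕ) < l ∧ p.1 < p.2) with hS
  have memS : ∀ p : Fin n × Fin n, p ∈ S ↔ ((p.1 : ℕ) < l ∧ p.1 < p.2) := by
    intro p; simp [hS]
  have τlt : ∀ a : Fin n, (a : ℕ) < l → ((τ a : ℕ) < l) := by
    intro a ha
    rw [hτ, Equiv.swap_apply_def]
    split_ifs <;> assumption
  have τne : ∀ a b : Fin n, a ≠ b → τ a ≠ τ b := fun a b h h2 => h (τ.injective h2)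
  set e : Fin n × Fin n → Fin n × Fin n :=
    fun p => if τ p.1 < τ p.2 then (τ p.1, τ p.2) else (τ p.2, τ p.1) with he
  -- step 1: pointwise sign extraction
  have step1 : ∀ p ∈ S,
      (y (τ p.1) + y (τ p.2)) / (y (τ p.1) - y (τ p.2))
        = (if τ p.1 < τ p.2 then (1 : F) else -1) *
          ((y (e p).1 + y (e p).2) / (y (e p).1 - y (e p).2)) := by
    intro p hp
    rw [he]
    by_cases h : τ p.1 < τ p.2
    · simp [h]
    · simp only [h, if_false]
      rw [ratio_antisymm]
      ring
  rw [Finset.prod_congr rfl step1, Finset.prod_mul_distrib]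
  -- step 2: reindex by the involution e
  have hemem : ∀ p ∈ S, e p ∈ S := by
    intro p hp
    rw [memS] at hp ⊢
    obtain ⟨h1, h2⟩ := hp
    have hne : τ p.1 ≠ τ p.2 := τne _ _ (ne_of_lt h2)
    rw [he]
    by_cases h : τ p.1 < τ p.2
    · simpa [h] using τlt _ h1
    · have h' : τ p.2 < τ p.1 := lt_of_le_of_ne (le_of_not_gt h) (Ne.symm hne)
      have h'' : (τ p.2 : ℕ) < (τ p.1 : ℕ) := h'
      simp only [h, if_false]
      exact ⟨lt_trans h'' (τlt _ h1), h'⟩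
  have heinv : ∀ p ∈ S, e (e p) = p := by
    intro p hp
    rw [memS] at hp
    obtain ⟨h1, h2⟩ := hp
    rw [he]
    by_cases h : τ p.1 < τ p.2
    · simp only [h, if_true]
      simp [Equiv.swap_apply_self, hτ, h2]
    · simp only [h, if_false]
      simp only [Equiv.swap_apply_self, hτ]
      rw [if_neg (not_lt.mpr (le_of_lt h2))]
  have step2 : (∏ p ∈ S, ((y (e p).1 + y (e p).2) / (y (e p).1 - y (e p).2)))
      = ∏ p ∈ S, ((y p.1 + y p.2) / (y p.1 - y p.2)) :=
    Finset.prod_nbij' e e hemem hemem heinv heinv (fun p _ => rfl)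
  rw [step2]
  -- step 3: the sign product equals -1
  have step3 : (∏ p ∈ S, (if τ p.1 < τ p.2 then (1 : F) else -1)) = -1 := by
    rw [Finset.prod_ite]
    rw [Finset.prod_const_one, one_mul]
    set R := S.filter (fun p : Fin n × Fin n => ¬ τ p.1 < τ p.2) with hR
    -- characterize membership in R minus (u,v)
    have memR : ∀ p : Fin n × Fin n, p ∈ R ↔
        ((p.1 : ℕ) < l ∧ p.1 < p.2 ∧ ¬ τ p.1 < τ p.2) := by
      intro p; simp [hR, memS, and_assoc]
    have huvR : ((u, v) : Fin n × Fin n) ∈ R := by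
      rw [memR]
      refine ⟨hu, huv, ?_⟩
      simp [hτ, Equiv.swap_apply_left, Equiv.swap_apply_right]
      exact le_of_lt huv
    have char : ∀ p : Fin n × Fin n, p ∈ R → p ≠ (u, v) →
        (p.1 = u ∧ u < p.2 ∧ p.2 < v) ∨ (p.2 = v ∧ u < p.1 ∧ p.1 < v) := by
      intro p hp hne
      rw [memR] at hp
      obtain ⟨h1, h2, h3⟩ := hp
      have hgt : τ p.2 < τ p.1 :=
        lt_of_le_of_ne (le_of_not_gt h3) (τne _ _ (ne_of_lt h2)).symm
      have c1 : p.1 = u ∨ p.1 = v ∨ (p.1 ≠ u ∧ p.1 ≠ v) := by tauto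
      have c2 : p.2 = u ∨ p.2 = v ∨ (p.2 ≠ u ∧ p.2 ≠ v) := by tauto
      rcases c1 with rfl1 | rfl1 | ⟨n1, n2⟩
      · -- p.1 = u
        rcases c2 with h4 | h4 | ⟨m1, m2⟩
        · exact ((ne_of_lt h2) (rfl1.trans h4.symm)).elim
        · exact absurd (Prod.ext rfl1 h4) hne
        · left
          rw [rfl1, hτ, Equiv.swap_apply_left, Equiv.swap_apply_of_ne_of_ne m1 m2] at hgt
          have h2' : u < p.2 := by rw [← rfl1]; exact h2
          exact ⟨rfl1, h2', hgt⟩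
      · -- p.1 = v
        rcases c2 with h4 | h4 | ⟨m1, m2⟩
        · have hvu : v < u := by rw [← rfl1, ← h4]; exact h2
          exact absurd (lt_trans huv hvu) (lt_irrefl _)
        · exact ((ne_of_lt h2) (rfl1.trans h4.symm)).elim
        · rw [rfl1, hτ, Equiv.swap_apply_right, Equiv.swap_apply_of_ne_of_ne m1 m2] at hgt
          have hv2 : v < p.2 := by rw [← rfl1]; exact h2
          exact absurd (lt_trans (lt_trans hgt huv) hv2) (lt_irrefl _)
      · rcases c2 with h4 | h4 | ⟨m1, m2⟩
        · rw [h4, hτ, Equiv.swap_apply_left, Equiv.swap_apply_of_ne_of_ne n1 n2] at hgt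
          have h2' : p.1 < u := by rw [← h4]; exact h2
          exact absurd (lt_trans huv (lt_trans hgt h2')) (lt_irrefl _)
        · right
          rw [h4, hτ, Equiv.swap_apply_right, Equiv.swap_apply_of_ne_of_ne n1 n2] at hgt
          have h2' : p.1 < v := by rw [← h4]; exact h2
          exact ⟨h4, hgt, h2'⟩
        · rw [hτ, Equiv.swap_apply_of_ne_of_ne n1 n2, Equiv.swap_apply_of_ne_of_ne m1 m2] at hgt
          exact absurd (lt_trans h2 hgt) (lt_irrefl _)
    -- now compute the cardinality parity via an involution on R.erase (u,v)
    rw [← Finset.mul_prod_erase R _ huvR]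
    have : (∏ _p ∈ R.erase (u, v), (-1 : F)) = 1 := by
      apply Finset.prod_involution
        (g := fun p _ => if p.1 = u then ((p.2, v) : Fin n × Fin n) else (u, p.1))
      · intro a ha; norm_num
      · intro p hp _
        obtain ⟨hpne, hpR⟩ := Finset.mem_erase.mp hp
        rcases char p hpR hpne with ⟨e1, e2, e3⟩ | ⟨e1, e2, e3⟩
        · rw [if_pos e1]
          intro hcontra
          have := congrArg Prod.fst hcontra
          simp only at this
          exact absurd (this ▸ e2 : u < p.1) (by rw [e1]; exact lt_irrefl u)
        · have hne1 : p.1 ≠ u := ne_of_gt e2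
          rw [if_neg hne1]
          intro hcontra
          exact hne1 ((congrArg Prod.fst hcontra).symm ▸ rfl)
      · intro p hp
        obtain ⟨hpne, hpR⟩ := Finset.mem_erase.mp hp
        rcases char p hpR hpne with ⟨e1, e2, e3⟩ | ⟨e1, e2, e3⟩
        · rw [if_pos e1, Finset.mem_erase, memR]
          have hb1 : p.2 ≠ u := ne_of_gt e2
          have hb2 : p.2 ≠ v := ne_of_lt e3
          constructor
          · intro hcontra
            exact hb1 (by simpa using congrArg Prod.fst hcontra)
          · refine ⟨lt_trans (show (p.2 : ℕ) < (v : ℕ) from e3) hv, e3, ?_⟩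
            rw [hτ, Equiv.swap_apply_of_ne_of_ne hb1 hb2, Equiv.swap_apply_right]
            exact not_lt.mpr (le_of_lt e2)
        · have hne1 : p.1 ≠ u := ne_of_gt e2
          rw [if_neg hne1, Finset.mem_erase, memR]
          have ha2 : p.1 ≠ v := ne_of_lt e3
          constructor
          · intro hcontra
            exact ha2 (by simpa using congrArg Prod.snd hcontra)
          · refine ⟨hu, e2, ?_⟩
            rw [hτ, Equiv.swap_apply_left, Equiv.swap_apply_of_ne_of_ne hne1 ha2]
            exact not_lt.mpr (le_of_lt e3)
      · intro p hp
        obtain ⟨hpne, hpR⟩ := Finset.mem_erase.mp hp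
        rcases char p hpR hpne with ⟨e1, e2, e3⟩ | ⟨e1, e2, e3⟩
        · have hb1 : p.2 ≠ u := ne_of_gt e2
          simp only [if_pos e1, if_neg hb1]
          exact Prod.ext e1.symm rfl
        · have hne1 : p.1 ≠ u := ne_of_gt e2
          simp only [if_neg hne1, if_pos rfl]
          exact Prod.ext rfl e1.symm
    rw [this, mul_one]
  rw [step3, neg_one_mul]

end SignLemma

/-- `ratioProd` changes sign upon precomposition with a swap of two indices `< l`. -/
private lemma ratioProd_comp_swap {n : ℕ} (l : ℕ) (y : Fin n → K n) (u v : Fin n)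
    (hu : (u : ℕ) < l) (hv : (v : ℕ) < l) (huv : u ≠ v) :
    ratioProd l (fun k => y (Equiv.swap u v k)) = - ratioProd l y := by
  rcases lt_or_gt_of_ne huv with h | h
  · exact prod_swap_neg n l y u v hu hv h
  · rw [Equiv.swap_comm]
    exact prod_swap_neg n l y v u hv hu h

/-- If the polynomial `r` is symmetric in two of its variables `x_i, x_j` (`i ≠ j`),
then the symmetrization `R̃_n` vanishes. -/
theorem Rtilde_eq_zero_of_symmetric_pair
    (n l : ℕ) (hl : l ≤ n) (r : MvPolynomial (Fin l) ℂ)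
    (i j : Fin l) (hij : i ≠ j)
    (hsymm : MvPolynomial.rename (Equiv.swap i j) r = r) :
    Rtilde n l hl r = 0 := by
  classical
  set u : Fin n := Fin.castLE hl i with hu
  set v : Fin n := Fin.castLE hl j with hvdef
  have huv : u ≠ v := fun h => hij (Fin.castLE_injective hl h)
  set τ : Equiv.Perm (Fin n) := Equiv.swap u v with hτ
  set f : Equiv.Perm (Fin n) → K n := fun ω =>
    (MvPolynomial.eval₂
        ((algebraMap (MvPolynomial (Fin n) ℂ) (K n)).comp MvPolynomial.C)
        (fun i : Fin l => Xv (ω (Fin.castLE hl i))) r) *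
      ratioProd l (fun j => Xv (ω j)) with hf
  have key : ∀ ω : Equiv.Perm (Fin n), f (ω * τ) = - f ω := by
    intro ω
    rw [hf]
    simp only
    have hev : (fun k : Fin l => Xv ((ω * τ) (Fin.castLE hl k)))
        = (fun k : Fin l => Xv (ω (Fin.castLE hl k))) ∘ (Equiv.swap i j) := by
      funext k
      simp only [Equiv.Perm.mul_apply, Function.comp_apply, hτ, hu, hvdef]
      rw [Function.Injective.swap_apply (Fin.castLE_injective hl)]
    have heval : MvPolynomial.eval₂
          ((algebraMap (MvPolynomial (Fin n) ℂ) (K n)).comp MvPolynomial.C)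
          (fun k : Fin l => Xv ((ω * τ) (Fin.castLE hl k))) r
        = MvPolynomial.eval₂
          ((algebraMap (MvPolynomial (Fin n) ℂ) (K n)).comp MvPolynomial.C)
          (fun k : Fin l => Xv (ω (Fin.castLE hl k))) r := by
      conv_rhs => rw [← hsymm]
      rw [MvPolynomial.eval₂_rename, hev]
    have hratio : ratioProd l (fun k => Xv ((ω * τ) k))
        = - ratioProd l (fun k => Xv (ω k)) := by
      have : (fun k => Xv ((ω * τ) k)) = fun k => (fun m => Xv (ω m)) (Equiv.swap u v k) := by
        funext k; simp [hτ, Equiv.Perm.mul_apply]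
      rw [this]
      refine ratioProd_comp_swap l (fun m => Xv (ω m)) u v ?_ ?_ huv
      · simpa [hu] using i.isLt
      · simpa [hvdef] using j.isLt
    rw [heval, hratio]
    ring
  have : Rtilde n l hl r = ∑ ω : Equiv.Perm (Fin n), f ω := rfl
  rw [this]
  apply Finset.sum_involution (g := fun ω _ => ω * τ)
  · intro ω _
    rw [key ω]; ring
  · intro ω _ hne hcontra
    have hτ1 : τ = 1 := by
      have := congrArg (fun σ => ω⁻¹ * σ) hcontra
      simpa [mul_assoc] using this
    exact huv (by simpa [hτ, Equiv.swap_eq_one_iff] using hτ1)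
  · intro ω _; exact Finset.mem_univ _
  · intro ω _
    rw [mul_assoc, hτ, Equiv.swap_mul_self, mul_one]


end
end
end

section
/- Let r(x_1,…,x_l) be a polynomial divisible by the product x_1 x_2 ⋯ x_l, and for n ≥ l define R̃_n(x_1,…,x_n) = ∑_{ω∈S(n)} r(x_{ω(1)},…,x_{ω(l)}) · ∏_{i≤l, i<j≤n} (x_{ω(i)}+x_{ω(j)})/(x_{ω(i)}−x_{ω(j)}). Then R̃_{n+1}(x_1,…,x_n,0) = (n+1−l) · R̃_n(x_1,…,x_n). -/
noncomputable section


noncomputable section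

/-!
Clearing denominators, the `ω`-summand of `R̃_{n+1}` is a quotient of polynomials whose
denominator `∏ (x_{ω(a)} - x_{ω(b)})` does not vanish at `x_{n+1} = 0`, so `R̃_{n+1}` can be
specialized summand by summand. Write `ω = σ ∘ (j, n+1)`, where `j = ω⁻¹(n+1)` and
`σ ∈ S(n)` is extended by fixing `n+1`. If `j ≤ l`, the summand evaluates `r` at a point
with a zero coordinate, which gives `0` since `x_1 ⋯ x_l ∣ r`. If `j > l`, the transposition
only permutes, for each `a ≤ l`, the indices `b > a` of the inner product, and the factor
with `x_{n+1} = 0` is `(x_a + 0) / (x_a - 0) = 1`; what remains is the `σ`-summand of `R̃_n`,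
once for each of the `n + 1 - l` values of `j`.
-/

open MvPolynomial Finset Equiv

section ClearDenominators

variable {A F L ι : Type*} [CommRing A] [Field F] [Field L]

lemma map_prod_ne_zero (g : A →+* F) {s : Finset ι} {den : ι → A}
    (hden : ∀ i ∈ s, g (den i) ≠ 0) : g (∏ i ∈ s, den i) ≠ 0 := by
  simpa [map_prod, prod_ne_zero_iff] using hden

lemma sum_map_div_map [DecidableEq ι] (g : A →+* F) (s : Finset ι) (num den : ι → A)
    (hden : ∀ i ∈ s, g (den i) ≠ 0) :
    ∑ i ∈ s, g (num i) / g (den i)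
      = g (∑ i ∈ s, num i * ∏ j ∈ s.erase i, den j) / g (∏ i ∈ s, den i) := by
  rw [eq_div_iff (map_prod_ne_zero g hden), sum_mul, map_sum]
  refine sum_congr rfl fun i hi => ?_
  rw [map_mul, map_prod, map_prod, ← mul_prod_erase s _ hi]
  field_simp [hden i hi]

lemma map_eq_sum_div_of_injective [DecidableEq ι] (g : A →+* L) (hg : Function.Injective g)
    (f : A →+* F) (s : Finset ι) (a : A) (num den : ι → A)
    (hden : ∀ i ∈ s, f (den i) ≠ 0) (h : g a = ∑ i ∈ s, g (num i) / g (den i)) :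
    f a = ∑ i ∈ s, f (num i) / f (den i) := by
  have hgden : ∀ i ∈ s, g (den i) ≠ 0 := fun i hi h0 =>
    hden i hi (by rw [(map_eq_zero_iff g hg).mp h0, map_zero])
  rw [sum_map_div_map g s num den hgden, eq_div_iff (map_prod_ne_zero g hgden), ← map_mul] at h
  rw [sum_map_div_map f s num den hden, eq_div_iff (map_prod_ne_zero f hden), ← map_mul, hg h]

end ClearDenominators

section Summands

variable {R F : Type*} [CommRing R] [Field F] {l m : ℕ}

def pairRatio (l : ℕ) (x : Fin m → F) : F :=
  ∏ a ∈ univ.filter (fun a : Fin m => (a : ℕ) < l), ∏ b ∈ Ioi a, (x a + x b) / (x a - x b)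

def rtildeTerm (c : R →+* F) (r : MvPolynomial (Fin l) R) (hl : l ≤ m) (x : Fin m → F) : F :=
  eval₂ c (fun i => x (Fin.castLE hl i)) r * pairRatio l x

variable (R) in
noncomputable def rtildeDen (l m : ℕ) : MvPolynomial (Fin m) R :=
  ∏ a ∈ univ.filter (fun a : Fin m => (a : ℕ) < l), ∏ b ∈ Ioi a, (X a - X b)

noncomputable def rtildeNum (r : MvPolynomial (Fin l) R) (hl : l ≤ m) : MvPolynomial (Fin m) R :=
  rename (Fin.castLE hl) r *
    ∏ a ∈ univ.filter (fun a : Fin m => (a : ℕ) < l), ∏ b ∈ Ioi a, (X a + X b)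

lemma rtildeTerm_map_X (g : MvPolynomial (Fin m) R →+* F) (r : MvPolynomial (Fin l) R)
    (hl : l ≤ m) :
    rtildeTerm (g.comp C) r hl (fun j => g (X j)) = g (rtildeNum r hl) / g (rtildeDen R l m) := by
  simp only [rtildeTerm, pairRatio, rtildeNum, rtildeDen, map_mul, map_prod, map_add, map_sub,
    prod_div_distrib, mul_div_assoc]
  congr 1
  rw [rename_eq_aeval, aeval_def, algebraMap_eq, eval₂_comp_left]
  rfl

lemma rtildeTerm_comp_perm (g : MvPolynomial (Fin m) R →+* F) (r : MvPolynomial (Fin l) R)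
    (hl : l ≤ m) (ω : Perm (Fin m)) :
    rtildeTerm (g.comp C) r hl (fun j => g (X (ω j)))
      = g (rename ω (rtildeNum r hl)) / g (rename ω (rtildeDen R l m)) := by
  have hC : (g.comp (rename ω).toRingHom).comp C = g.comp C := by
    ext c
    simp
  have h := rtildeTerm_map_X (g.comp (rename ω).toRingHom) r hl
  rw [hC] at h
  simpa using h

lemma map_rtildeDen_ne_zero (g : MvPolynomial (Fin m) R →+* F)
    (hg : Function.Injective fun j => g (X j)) : g (rtildeDen R l m) ≠ 0 := by
  simp only [rtildeDen, map_prod, map_sub, prod_ne_zero_iff, mem_Ioi, sub_ne_zero]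
  exact fun a _ b hb => hg.ne hb.ne

end Summands

section Permutations

lemma card_filter_le_val (l m : ℕ) : #{j : Fin m | l ≤ (j : ℕ)} = m - l := by
  have h : ({j : Fin m | l ≤ (j : ℕ)} : Finset (Fin m)).map Fin.valEmbedding = Ico l m := by
    ext k
    simp only [mem_map, mem_filter, mem_univ, true_and, Fin.valEmbedding_apply, mem_Ico]
    exact ⟨fun ⟨j, hj, hjk⟩ => hjk ▸ ⟨hj, j.is_lt⟩,
      fun ⟨hk, hkm⟩ => ⟨⟨k, hkm⟩, hk, rfl⟩⟩
  rw [← card_map, h, Nat.card_Ico]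

def extendLast {n : ℕ} (σ : Perm (Fin n)) : Perm (Fin (n + 1)) :=
  finSuccEquivLast.symm.permCongr (optionCongr σ)

lemma snoc_comp_extendLast {α : Type*} {n : ℕ} (x : Fin n → α) (a : α) (σ : Perm (Fin n)) :
    (Fin.snoc x a : Fin (n + 1) → α) ∘ extendLast σ = Fin.snoc (x ∘ σ) a := by
  ext i
  induction i using Fin.lastCases <;> simp [extendLast, permCongr_apply]

/-- `Perm.decomposeOption` transported along `finSuccEquivLast` and inverted, so that `j` is the
preimage of `Fin.last n` rather than its image. -/
def permSwapLast (n : ℕ) : Fin (n + 1) × Perm (Fin n) ≃ Perm (Fin (n + 1)) :=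
  ((prodCongr finSuccEquivLast (Equiv.inv _)).trans Perm.decomposeOption.symm).trans
    ((permCongr finSuccEquivLast.symm).trans (Equiv.inv _))

lemma permSwapLast_apply {n : ℕ} (j : Fin (n + 1)) (σ : Perm (Fin n)) (i : Fin (n + 1)) :
    permSwapLast n (j, σ) i = extendLast σ (swap j (Fin.last n) i) := by
  simp only [permSwapLast, trans_apply, Equiv.inv_apply, Perm.inv_def, symm_apply_eq]
  simp [extendLast, permCongr_apply]
  rw [← finSuccEquivLast_last, finSuccEquivLast.injective.swap_apply, swap_comm,
    swap_apply_self, symm_apply_apply]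

end Permutations

section Specialization

variable {R F : Type*} [CommRing R] [Field F] {l m n : ℕ}

lemma eval₂_eq_zero_of_prod_X_dvd (c : R →+* F) {r : MvPolynomial (Fin l) R}
    (hdvd : (∏ i, X i) ∣ r) {v : Fin l → F} (i : Fin l) (hi : v i = 0) :
    eval₂ c v r = 0 := by
  obtain ⟨s, rfl⟩ := hdvd
  rw [eval₂_mul, eval₂_prod, prod_eq_zero (mem_univ i) (by rw [eval₂_X, hi]), zero_mul]

lemma rtildeTerm_eq_zero_of_apply_eq_zero (c : R →+* F) {r : MvPolynomial (Fin l) R}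
    (hdvd : (∏ i, X i) ∣ r) (hl : l ≤ m) {x : Fin m → F} {j : Fin m} (hj : (j : ℕ) < l)
    (hxj : x j = 0) : rtildeTerm c r hl x = 0 :=
  mul_eq_zero_of_left (eval₂_eq_zero_of_prod_X_dvd c hdvd ⟨j, hj⟩ hxj) _

lemma pairRatio_comp_swap (x : Fin m → F) {j k : Fin m} (hj : l ≤ j) (hk : l ≤ k) :
    pairRatio l (x ∘ swap j k) = pairRatio l x := by
  refine prod_congr rfl fun a ha => ?_
  have ha : (a : ℕ) < l := (mem_filter.mp ha).2
  have hja : a < j := by rw [Fin.lt_def]; omega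
  have hka : a < k := by rw [Fin.lt_def]; omega
  simp only [Function.comp_apply, swap_apply_of_ne_of_ne hja.ne hka.ne]
  refine (swap j k).prod_comp (Ioi a) (fun b => (x a + x b) / (x a - x b)) fun b hb => ?_
  obtain ⟨-, rfl | rfl⟩ := swap_apply_ne_self_iff.mp hb
  exacts [mem_Ioi.mpr hja, mem_Ioi.mpr hka]

lemma pairRatio_of_last_eq_zero (hl : l ≤ n) (x : Fin (n + 1) → F) (hlast : x (Fin.last n) = 0)
    (hx : ∀ k : Fin n, (k : ℕ) < l → x k.castSucc ≠ 0) :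
    pairRatio l x = pairRatio l (x ∘ Fin.castSucc) := by
  simp only [pairRatio, prod_filter, ← filter_lt_eq_Ioi, Fin.prod_univ_castSucc]
  rw [if_neg (by simpa using hl.not_gt), mul_one]
  refine prod_congr rfl fun k _ => ?_
  simp only [Fin.val_castSucc, Fin.castSucc_lt_castSucc_iff, Fin.castSucc_lt_last, if_true,
    hlast, add_zero, sub_zero, Function.comp_apply]
  split_ifs with hk
  · rw [div_self (hx k hk), mul_one]
  · rfl

lemma rtildeTerm_comp_swap_last (c : R →+* F) (r : MvPolynomial (Fin l) R) (hl : l ≤ n)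
    {j : Fin (n + 1)} (hj : l ≤ j) (x : Fin (n + 1) → F) (hlast : x (Fin.last n) = 0)
    (hx : ∀ k : Fin n, (k : ℕ) < l → x k.castSucc ≠ 0) :
    rtildeTerm c r (hl.trans n.le_succ) (x ∘ swap j (Fin.last n))
      = rtildeTerm c r hl (x ∘ Fin.castSucc) := by
  have hfix (i : Fin l) : swap j (Fin.last n) (Fin.castLE (hl.trans n.le_succ) i)
      = (Fin.castLE hl i).castSucc := by
    refine (swap_apply_of_ne_of_ne ?_ ?_).trans (Fin.ext rfl) <;>
      simp only [ne_eq, Fin.ext_iff, Fin.val_castLE, Fin.val_last] <;> omega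
  rw [rtildeTerm, rtildeTerm, pairRatio_comp_swap x hj (by simpa using hl),
    pairRatio_of_last_eq_zero hl x hlast hx]
  simp only [Function.comp_apply, hfix]

theorem sum_rtildeTerm_snoc_zero (c : R →+* F) {r : MvPolynomial (Fin l) R}
    (hdvd : (∏ i, X i) ∣ r) (hl : l ≤ n) (x : Fin n → F) (hx : ∀ k, x k ≠ 0) :
    ∑ ω : Perm (Fin (n + 1)), rtildeTerm c r (hl.trans n.le_succ) (Fin.snoc x 0 ∘ ω)
      = (n + 1 - l) • ∑ σ : Perm (Fin n), rtildeTerm c r hl (x ∘ σ) := by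
  have hfiber (j : Fin (n + 1)) :
      ∑ σ, rtildeTerm c r (hl.trans n.le_succ) (Fin.snoc x 0 ∘ permSwapLast n (j, σ))
        = if l ≤ (j : ℕ) then ∑ σ : Perm (Fin n), rtildeTerm c r hl (x ∘ σ) else 0 := by
    have hcomp (σ : Perm (Fin n)) : (Fin.snoc x 0 : Fin (n + 1) → F) ∘ permSwapLast n (j, σ)
        = Fin.snoc (x ∘ σ) 0 ∘ swap j (Fin.last n) := by
      ext i
      rw [Function.comp_apply, permSwapLast_apply, ← snoc_comp_extendLast]
      rfl
    split_ifs with hj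
    · refine sum_congr rfl fun σ _ => ?_
      rw [hcomp, rtildeTerm_comp_swap_last c r hl hj _ (Fin.snoc_last ..)
        (fun k _ => by simpa using hx (σ k)), Fin.snoc_comp_castSucc]
    · refine sum_eq_zero fun σ _ => ?_
      refine rtildeTerm_eq_zero_of_apply_eq_zero c hdvd _ (not_le.mp hj) ?_
      simp [permSwapLast_apply, extendLast, permCongr_apply]
  rw [← (permSwapLast n).sum_comp, Fintype.sum_prod_type]
  simp only [hfiber]
  rw [← sum_filter, sum_const, card_filter_le_val]

end Specialization

section RationalFunctions

variable {n : ℕ}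

lemma Xv_injective : Function.Injective (Xv (n := n)) :=
  (IsFractionRing.injective (MvPolynomial (Fin n) ℂ) (K n)).comp (X_injective (R := ℂ))

lemma Xv_ne_zero (i : Fin n) : Xv i ≠ 0 :=
  (map_ne_zero_iff _ (IsFractionRing.injective (MvPolynomial (Fin n) ℂ) (K n))).mpr
    (X_ne_zero i)

lemma ratioProd_eq_pairRatio (l : ℕ) (x : Fin n → K n) : ratioProd l x = pairRatio l x := by
  rw [ratioProd, pairRatio]
  exact prod_finset_product _ _ _ fun p => by simp

lemma Rtilde_eq_sum_rtildeTerm (l : ℕ) (hl : l ≤ n) (r : MvPolynomial (Fin l) ℂ) :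
    Rtilde n l hl r = ∑ ω : Perm (Fin n),
      rtildeTerm ((algebraMap (MvPolynomial (Fin n) ℂ) (K n)).comp C) r hl (Xv ∘ ω) := by
  simp only [Rtilde, rtildeTerm, ratioProd_eq_pairRatio]
  rfl

variable (n) in
noncomputable def specializeLast : MvPolynomial (Fin (n + 1)) ℂ →+* K n :=
  (algebraMap (MvPolynomial (Fin n) ℂ) (K n)).comp (aeval fun i : Fin (n + 1) =>
    if h : (i : ℕ) < n then (X ⟨i, h⟩ : MvPolynomial (Fin n) ℂ) else 0).toRingHom

lemma specializeLast_X (i : Fin (n + 1)) :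
    specializeLast n (X i) = (Fin.snoc Xv 0 : Fin (n + 1) → K n) i := by
  induction i using Fin.lastCases <;> simp [specializeLast, Xv]

lemma specializeLast_comp_C :
    (specializeLast n).comp C = (algebraMap (MvPolynomial (Fin n) ℂ) (K n)).comp C := by
  ext c
  simp [specializeLast]

end RationalFunctions

/-- If `r` is divisible by `x_1 ⋯ x_l`, then setting the last variable of `R̃_{n+1}`
to `0` gives `(n+1−l) · R̃_n`.  (Since the `R̃`'s are polynomials, this is stated via
arbitrary polynomial representatives `p` and `q`.) -/
theorem Rtilde_specialize_last_var
    (n l : ℕ) (hl : l ≤ n) (r : MvPolynomial (Fin l) ℂ)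
    (hdvd : (∏ i : Fin l, MvPolynomial.X i) ∣ r)
    (p : MvPolynomial (Fin (n + 1)) ℂ) (q : MvPolynomial (Fin n) ℂ)
    (hp : algebraMap (MvPolynomial (Fin (n + 1)) ℂ) (K (n + 1)) p
        = Rtilde (n + 1) l (hl.trans (Nat.le_succ n)) r)
    (hq : algebraMap (MvPolynomial (Fin n) ℂ) (K n) q = Rtilde n l hl r) :
    MvPolynomial.aeval
        (fun i : Fin (n + 1) =>
          if h : (i : ℕ) < n then (MvPolynomial.X ⟨i, h⟩ : MvPolynomial (Fin n) ℂ) else 0) p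
      = ((n + 1 - l : ℕ) : ℂ) • q := by
  have hl' := hl.trans n.le_succ
  have hp_sum : algebraMap _ (K (n + 1)) p = ∑ ω : Perm (Fin (n + 1)),
      algebraMap _ _ (rename ω (rtildeNum r hl')) /
        algebraMap _ _ (rename ω (rtildeDen ℂ l (n + 1))) := by
    rw [hp, Rtilde_eq_sum_rtildeTerm]
    exact sum_congr rfl fun ω _ => rtildeTerm_comp_perm _ r hl' ω
  have hden (ω : Perm (Fin (n + 1))) :
      specializeLast n (rename ω (rtildeDen ℂ l (n + 1))) ≠ 0 := by
    refine map_rtildeDen_ne_zero ((specializeLast n).comp (rename ω).toRingHom) ?_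
    simpa [specializeLast_X, Function.comp_def] using
      (Fin.snoc_injective_of_injective Xv_injective fun ⟨k, hk⟩ => Xv_ne_zero k hk).comp
        ω.injective
  have hspec : specializeLast n p = (n + 1 - l) • Rtilde n l hl r := by
    rw [map_eq_sum_div_of_injective _ (IsFractionRing.injective _ _) (specializeLast n) univ p
      _ _ (fun ω _ => hden ω) hp_sum, Rtilde_eq_sum_rtildeTerm,
      ← sum_rtildeTerm_snoc_zero _ hdvd hl Xv Xv_ne_zero]
    refine sum_congr rfl fun ω _ => ?_
    rw [← rtildeTerm_comp_perm, specializeLast_comp_C]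
    simp only [specializeLast_X]
    rfl
  apply IsFractionRing.injective (MvPolynomial (Fin n) ℂ) (K n)
  rw [Nat.cast_smul_eq_nsmul, map_nsmul, hq, ← hspec]
  rfl
end
end
end

section
/- If ν is a partition that is not strict (i.e., ν has two equal nonzero parts), then for any sequence a with a_1 = 0 the multiparameter Schur P-polynomial P_{ν;a|n} is identically zero. -/
noncomputable section

def Cv {n : ℕ} (c : ℂ) : K n :=
  algebraMap (MvPolynomial (Fin n) ℂ) (K n) (MvPolynomial.C c)

set_option maxHeartbeats 1000000 in
/-- If `ν` is a partition that is not strict (it has two equal nonzero parts), then the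
multiparameter Schur P-polynomial `P_{ν;a|n}` is identically zero. -/
theorem Pmulti_eq_zero_of_not_strict
    (a : ℕ → ℂ) (ha : a 1 = 0) (l n : ℕ) (hl : l ≤ n)
    (nu : Fin l → ℕ) (hdec : Antitone nu) (hpos : ∀ i, 0 < nu i)
    (hns : ∃ i j, i ≠ j ∧ nu i = nu j) :
    (Cv (((n - l).factorial : ℂ))⁻¹ *
        ∑ ω : Equiv.Perm (Fin n),
          (∏ i : Fin l,
              ∏ k ∈ Finset.range (nu i), (Xv (ω (Fin.castLE hl i)) - Cv (a (k + 1)))) *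
            ratioProd l (fun j => Xv (ω j)) : K n) = 0 := by
  classical
  obtain ⟨i0, j0, hij0, hnu0⟩ := hns
  obtain ⟨i, j, hij, hnu⟩ : ∃ i j : Fin l, i < j ∧ nu i = nu j := by
    rcases hij0.lt_or_gt with h | h
    · exact ⟨i0, j0, h, hnu0⟩
    · exact ⟨j0, i0, h, hnu0.symm⟩
  have hjl : (j : ℕ) < l := j.isLt
  have hilt : (i : ℕ) < (j : ℕ) := hij
  have hi1 : (i : ℕ) + 1 < l := by omega
  set m' : Fin l := ⟨(i : ℕ) + 1, hi1⟩ with hm'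
  have hle1 : i ≤ m' := by simp [Fin.le_def, hm']
  have hle2 : m' ≤ j := by rw [Fin.le_def]; simpa [hm'] using hilt
  have hnum : nu m' = nu i := le_antisymm (hdec hle1) (hnu ▸ hdec hle2)
  set c : Fin n := Fin.castLE hl i with hcdef
  set c' : Fin n := Fin.castLE hl m' with hc'def
  have hcv : (c' : ℕ) = (c : ℕ) + 1 := rfl
  have hcl : (c : ℕ) < l := i.isLt
  have hc'l : (c' : ℕ) < l := hi1
  set τ : Equiv.Perm (Fin n) := Equiv.swap c c' with hτdef
  have hτval : ∀ x : Fin n, ((τ x : Fin n) : ℕ) =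
      if (x : ℕ) = (c : ℕ) then (c' : ℕ) else
        if (x : ℕ) = (c' : ℕ) then (c : ℕ) else (x : ℕ) := by
    intro x
    by_cases h1 : x = c
    · subst h1; rw [hτdef, Equiv.swap_apply_left, if_pos rfl]
    · by_cases h2 : x = c'
      · subst h2
        rw [hτdef, Equiv.swap_apply_right, if_neg (by omega), if_pos rfl]
      · rw [hτdef, Equiv.swap_apply_of_ne_of_ne h1 h2,
          if_neg (fun h => h1 (Fin.ext h)), if_neg (fun h => h2 (Fin.ext h))]
  set T : Equiv.Perm (Fin n) → K n := fun ω =>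
    (∏ i : Fin l,
        ∏ k ∈ Finset.range (nu i), (Xv (ω (Fin.castLE hl i)) - Cv (a (k + 1)))) *
      ratioProd l (fun j => Xv (ω j)) with hT
  suffices hS : ∑ ω : Equiv.Perm (Fin n), T ω = 0 by
    rw [hS, mul_zero]
  -- key cancellation
  have key : ∀ ω : Equiv.Perm (Fin n), T (ω * τ) = - T ω := by
    intro ω
    have happ : ∀ x : Fin n, (ω * τ) x = ω (τ x) := fun x => rfl
    have hA : (∏ t : Fin l, ∏ k ∈ Finset.range (nu t),
        (Xv (ω (τ (Fin.castLE hl t))) - Cv (a (k + 1)))) =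
        ∏ t : Fin l, ∏ k ∈ Finset.range (nu t),
        (Xv (ω (Fin.castLE hl t)) - Cv (a (k + 1))) := by
      have hcast : ∀ t : Fin l, τ (Fin.castLE hl t) =
          Fin.castLE hl (Equiv.swap i m' t) := by
        intro t
        rw [hτdef, hcdef, hc'def]
        exact (Fin.castLE_injective hl).swap_apply i m' t
      have hnuσ : ∀ t, nu (Equiv.swap i m' t) = nu t := by
        intro t
        rcases eq_or_ne t i with rfl | h1
        · rw [Equiv.swap_apply_left, hnum]
        rcases eq_or_ne t m' with rfl | h2
        · rw [Equiv.swap_apply_right, hnum]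
        · rw [Equiv.swap_apply_of_ne_of_ne h1 h2]
      calc (∏ t : Fin l, ∏ k ∈ Finset.range (nu t),
              (Xv (ω (τ (Fin.castLE hl t))) - Cv (a (k + 1))))
          = ∏ t : Fin l, (fun s : Fin l => ∏ k ∈ Finset.range (nu s),
              (Xv (ω (Fin.castLE hl s)) - Cv (a (k + 1)))) (Equiv.swap i m' t) := by
            refine Finset.prod_congr rfl fun t _ => ?_
            simp only
            rw [hcast t, hnuσ t]
        _ = _ := by exact Equiv.prod_comp (Equiv.swap i m') (fun s : Fin l => ∏ k ∈ Finset.range (nu s), (Xv (ω (Fin.castLE hl s)) - Cv (a (k + 1))))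
    have hR : ratioProd l (fun x => Xv (ω (τ x))) =
        - ratioProd l (fun x => Xv (ω x)) := by
      unfold ratioProd
      set P : Finset (Fin n × Fin n) :=
        Finset.univ.filter (fun p : Fin n × Fin n => (p.1 : ℕ) < l ∧ p.1 < p.2) with hP
      have hmem : ((c, c') : Fin n × Fin n) ∈ P := by
        simp only [hP, Finset.mem_filter, Finset.mem_univ, true_and]
        exact ⟨hcl, Fin.lt_def.mpr (by omega)⟩
      rw [← Finset.mul_prod_erase _ _ hmem, ← Finset.mul_prod_erase _ _ hmem]
      have hstep : ∀ p : Fin n × Fin n, p ∈ P.erase (c, c') →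
          ((τ p.1, τ p.2) : Fin n × Fin n) ∈ P.erase (c, c') := by
        intro p hp
        simp only [hP, Finset.mem_erase, Finset.mem_filter, Finset.mem_univ, true_and,
          and_true] at hp ⊢
        obtain ⟨hne, h1, h2⟩ := hp
        have hne' : ¬((p.1 : ℕ) = (c : ℕ) ∧ (p.2 : ℕ) = (c' : ℕ)) := by
          rintro ⟨ha1, hb1⟩; exact hne (Prod.ext (Fin.ext ha1) (Fin.ext hb1))
        have e1 := hτval p.1
        have e2 := hτval p.2
        rw [Fin.lt_def] at h2
        have hvals : (((τ p.1 : Fin n) : ℕ) ≠ (c : ℕ) ∨ ((τ p.2 : Fin n) : ℕ) ≠ (c' : ℕ)) ∧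
            ((τ p.1 : Fin n) : ℕ) < l ∧ ((τ p.1 : Fin n) : ℕ) < ((τ p.2 : Fin n) : ℕ) := by
          split_ifs at e1 e2 <;> omega
        obtain ⟨hd, hl1, hlt⟩ := hvals
        refine ⟨fun h => ?_, hl1, Fin.lt_def.mpr hlt⟩
        rcases hd with hd | hd
        · exact hd (congrArg (fun q : Fin n × Fin n => ((q.1 : Fin n) : ℕ)) h)
        · exact hd (congrArg (fun q : Fin n × Fin n => ((q.2 : Fin n) : ℕ)) h)
      have hτinv : ∀ x : Fin n, τ (τ x) = x := by
        intro x; rw [hτdef]; exact Equiv.swap_apply_self _ _ x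
      have hbij : (∏ p ∈ P.erase (c, c'),
            (Xv (ω (τ p.1)) + Xv (ω (τ p.2))) / (Xv (ω (τ p.1)) - Xv (ω (τ p.2)))) =
          ∏ p ∈ P.erase (c, c'),
            (Xv (ω p.1) + Xv (ω p.2)) / (Xv (ω p.1) - Xv (ω p.2)) := by
        refine Finset.prod_nbij' (fun p => (τ p.1, τ p.2)) (fun p => (τ p.1, τ p.2))
          hstep hstep ?_ ?_ ?_
        · intro p _; simp [hτinv]
        · intro p _; simp [hτinv]
        · intro p _; rfl
      have hsign : (Xv (ω (τ c)) + Xv (ω (τ c'))) / (Xv (ω (τ c)) - Xv (ω (τ c'))) =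
          - ((Xv (ω c) + Xv (ω c')) / (Xv (ω c) - Xv (ω c'))) := by
        rw [hτdef, Equiv.swap_apply_left, Equiv.swap_apply_right]
        rw [add_comm, ← neg_sub (Xv (ω c)) (Xv (ω c'))]
        exact div_neg (Xv (ω c) + Xv (ω c'))
      calc ((Xv (ω (τ c)) + Xv (ω (τ c'))) / (Xv (ω (τ c)) - Xv (ω (τ c')))) *
            ∏ p ∈ P.erase (c, c'),
              (Xv (ω (τ p.1)) + Xv (ω (τ p.2))) / (Xv (ω (τ p.1)) - Xv (ω (τ p.2)))
          = (- ((Xv (ω c) + Xv (ω c')) / (Xv (ω c) - Xv (ω c')))) *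
            ∏ p ∈ P.erase (c, c'),
              (Xv (ω p.1) + Xv (ω p.2)) / (Xv (ω p.1) - Xv (ω p.2)) := by
            rw [hsign, hbij]
        _ = _ := by ring
    rw [hT]
    simp only [happ]
    rw [hA, hR]
    ring
  -- sum over the pairing is zero
  have h1 : ∑ ω : Equiv.Perm (Fin n), T (ω * τ) = ∑ ω : Equiv.Perm (Fin n), T ω := by
    have := Equiv.sum_comp (Equiv.mulRight τ) T
    simpa using this
  have h2 : ∑ ω : Equiv.Perm (Fin n), T ω = - ∑ ω : Equiv.Perm (Fin n), T ω := by
    calc ∑ ω : Equiv.Perm (Fin n), T ω = ∑ ω : Equiv.Perm (Fin n), T (ω * τ) := h1.symm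
      _ = ∑ ω : Equiv.Perm (Fin n), - T ω := Finset.sum_congr rfl (fun ω _ => key ω)
      _ = - ∑ ω : Equiv.Perm (Fin n), T ω := by rw [Finset.sum_neg_distrib]
  have h3 : (∑ ω : Equiv.Perm (Fin n), T ω) + ∑ ω : Equiv.Perm (Fin n), T ω = 0 := by
    nth_rewrite 2 [h2]
    exact add_neg_cancel _
  exact add_self_eq_zero.mp h3

end
end

section
/- (Vanishing property, part b) Assume the a_j are pairwise distinct with a_1 = 0. Let μ be a strict partition and x(μ)_i = a_{μ_i+1}. Then P_{μ;a}(x(μ)) = H_a(μ), where H_a(μ) = ∏_{k=1}^{ℓ(μ)} ∏_{j=1}^{μ_k}(a_{μ_k+1} − a_j) · ∏_{i<j} (a_{μ_i+1}+a_{μ_j+1})/(a_{μ_i+1}−a_{μ_j+1}). -/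
noncomputable section

/-- A strict partition: strictly decreasing positive parts `parts 0 > parts 1 > ⋯`,
indexed from `0`, with `parts i = 0` for `i ≥ l`. -/
structure SPartition where
  l : ℕ
  parts : ℕ → ℕ
  strict : ∀ i, i + 1 < l → parts (i + 1) < parts i
  pos : ∀ i, i < l → 0 < parts i
  zero : ∀ i, l ≤ i → parts i = 0

def SPartition.size (lam : SPartition) : ℕ := ∑ i ∈ Finset.range lam.l, lam.parts i

/-- The multiparameter Schur P-polynomial `P_{λ;a|n}`, as an element of the field of
rational functions in `n` variables (by convention `0` if `n < ℓ(λ)`). -/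
def Pmulti (lam : SPartition) (a : ℕ → ℂ) (n : ℕ) : K n :=
  if hl : lam.l ≤ n then
    Cv (((n - lam.l).factorial : ℂ))⁻¹ *
      ∑ ω : Equiv.Perm (Fin n),
        (∏ i : Fin lam.l,
            ∏ k ∈ Finset.range (lam.parts i.1),
              (Xv (ω (Fin.castLE hl i)) - Cv (a (k + 1)))) *
          ratioProd lam.l (fun j => Xv (ω j))
  else 0


/-- The evaluation point `x(λ) = (a_{λ_1+1}, …, a_{λ_{ℓ(λ)}+1}, 0, 0, …)` in `n`
variables. -/
def xpt (lam : SPartition) (a : ℕ → ℂ) (n : ℕ) : Fin n → ℂ :=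
  fun i => if (i : ℕ) < lam.l then a (lam.parts (i : ℕ) + 1) else 0

/-- `H_a(μ) = ∏_{k} (a_{μ_k+1}|a)^{μ_k} · ∏_{i<j} (a_{μ_i+1}+a_{μ_j+1})/(a_{μ_i+1}−a_{μ_j+1})`. -/
def Ha (a : ℕ → ℂ) (mu : SPartition) : ℂ :=
  (∏ k ∈ Finset.range mu.l, ∏ j ∈ Finset.range (mu.parts k), (a (mu.parts k + 1) - a (j + 1))) *
    ∏ p ∈ (Finset.range mu.l ×ˢ Finset.range mu.l).filter (fun p => p.1 < p.2),
      (a (mu.parts p.1 + 1) + a (mu.parts p.2 + 1)) /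
        (a (mu.parts p.1 + 1) - a (mu.parts p.2 + 1))

/-!
The summands of `P_{μ;a|n}` have denominators `x_i - x_j` that vanish at `x(μ)` when both `i` and
`j` exceed `ℓ(μ)`, so the polynomial `p` is evaluated in two specializations. First along a curve
`t ↦ x(t)` with `x(0) = x(μ)` and coordinates `(i + 1) t` beyond `ℓ(μ)`: there no denominator
vanishes, so `p(x(t))` is the sum of the specialized summands. Then at `t = 0`: for each summand
every ratio survives, a ratio of two coordinates beyond `ℓ(μ)` being a constant. Since `a_1 = 0`
and `μ` is strict, the factor `∏_i ∏_{k ≤ μ_i} (x_{ω(i)} - a_k)` vanishes at `x(μ)` unless `ω`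
fixes `1, …, ℓ(μ)`; each of the `(n - ℓ(μ))!` such `ω` contributes `H_a(μ)`.
-/

open Finset
open scoped Polynomial

section Specialization

variable {R F : Type*} [CommRing R] [Field F] (Q : Type*) [Field Q] [Algebra R Q] (ψ : R →+* F)

/-- The pairs `(r / s, ψ r / ψ s)` with `ψ s ≠ 0`: the graph of the specialization along `ψ` of
the fractions of `R` whose denominator survives `ψ`. -/
def specializationSubring : Subring (Q × F) where
  carrier := {z | ∃ r s : R, ψ s ≠ 0 ∧ algebraMap R Q s * z.1 = algebraMap R Q r ∧ ψ s * z.2 = ψ r}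
  one_mem' := ⟨1, 1, by simp⟩
  zero_mem' := ⟨0, 1, by simp⟩
  neg_mem' := by
    rintro z ⟨r, s, hs, hQ, hF⟩
    exact ⟨-r, s, hs, by simp [hQ], by simp [hF]⟩
  add_mem' := by
    rintro z w ⟨r, s, hs, hQ, hF⟩ ⟨r', s', hs', hQ', hF'⟩
    refine ⟨r * s' + r' * s, s * s', by simpa using mul_ne_zero hs hs', ?_, ?_⟩
    · simp only [Prod.fst_add, map_add, map_mul]
      linear_combination algebraMap R Q s' * hQ + algebraMap R Q s * hQ'
    · simp only [Prod.snd_add, map_add, map_mul]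
      linear_combination ψ s' * hF + ψ s * hF'
  mul_mem' := by
    rintro z w ⟨r, s, hs, hQ, hF⟩ ⟨r', s', hs', hQ', hF'⟩
    refine ⟨r * r', s * s', by simpa using mul_ne_zero hs hs', ?_, ?_⟩
    · simp only [Prod.fst_mul, map_mul]
      linear_combination algebraMap R Q s' * w.1 * hQ + algebraMap R Q r * hQ'
    · simp only [Prod.snd_mul, map_mul]
      linear_combination ψ s' * w.2 * hF + ψ r * hF'

variable {Q ψ}

theorem algebraMap_mem_specializationSubring (r : R) :
    (algebraMap R Q r, ψ r) ∈ specializationSubring Q ψ :=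
  ⟨r, 1, by simp⟩

theorem inv_mem_specializationSubring [IsFractionRing R Q] {x : Q} {v : F}
    (h : (x, v) ∈ specializationSubring Q ψ) (hv : v ≠ 0) :
    (x⁻¹, v⁻¹) ∈ specializationSubring Q ψ := by
  obtain ⟨r, s, hs, hQ, hF⟩ := h
  have hr : ψ r ≠ 0 := hF ▸ mul_ne_zero hs hv
  have hx : x ≠ 0 := by
    rintro rfl
    have : r = 0 := (IsFractionRing.to_map_eq_zero_iff (K := Q)).1 (by simpa using hQ.symm)
    exact hr (by rw [this, map_zero])
  refine ⟨s, r, hr, ?_, ?_⟩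
  · rw [← hQ, mul_assoc, mul_inv_cancel₀ hx, mul_one]
  · rw [← hF, mul_assoc, mul_inv_cancel₀ hv, mul_one]

theorem div_mem_specializationSubring [IsFractionRing R Q] {x y : Q} {v w : F}
    (hx : (x, v) ∈ specializationSubring Q ψ) (hy : (y, w) ∈ specializationSubring Q ψ)
    (hw : w ≠ 0) : (x / y, v / w) ∈ specializationSubring Q ψ := by
  simpa only [div_eq_mul_inv, Prod.mk_mul_mk] using mul_mem hx (inv_mem_specializationSubring hy hw)

theorem exists_prod_mem_specializationSubring {ι : Type*} {s : Finset ι} {f : ι → Q}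
    (h : ∀ i ∈ s, ∃ v, (f i, v) ∈ specializationSubring Q ψ) :
    ∃ v, (∏ i ∈ s, f i, v) ∈ specializationSubring Q ψ := by
  choose! g hg using h
  exact ⟨∏ i ∈ s, g i, prod_mk_prod s f g ▸ prod_mem hg⟩

theorem eq_of_algebraMap_mem_specializationSubring [IsFractionRing R Q] {r : R} {v : F}
    (h : (algebraMap R Q r, v) ∈ specializationSubring Q ψ) : v = ψ r := by
  obtain ⟨r', s, hs, hQ, hF⟩ := h
  have : s * r = r' := IsFractionRing.injective R Q (by simpa using hQ)
  exact mul_left_cancel₀ hs (by rw [hF, ← this, map_mul])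

end Specialization

theorem Equiv.Perm.apply_eq_self_of_forall_apply_le {α : Type*} [LinearOrder α] [WellFoundedLT α]
    (ω : Equiv.Perm α) {i : α} (h : ∀ j ≤ i, ω j ≤ j) : ω i = i := by
  induction i using WellFoundedLT.induction with
  | ind i ih =>
    by_contra hne
    have hlt : ω i < i := lt_of_le_of_ne (h i le_rfl) hne
    have hfix : ω (ω i) = ω i := ih (ω i) hlt fun j hj => h j (hj.trans hlt.le)
    exact hne (ω.injective hfix)

theorem card_perm_fixing_lt (n l : ℕ) :
    #{ω : Equiv.Perm (Fin n) | ∀ i : Fin n, (i : ℕ) < l → ω i = i} = (n - l).factorial := by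
  have hcard : Fintype.card {i : Fin n // l ≤ (i : ℕ)} = n - l := by
    rw [Fintype.card_subtype, ← card_map Fin.valEmbedding,
      show ({i | l ≤ (i : ℕ)} : Finset (Fin n)).map Fin.valEmbedding = Ico l n by
        ext; simp [Fin.exists_iff]]
    simp
  rw [← hcard, ← Fintype.card_perm, ← Fintype.card_subtype,
    Fintype.card_congr (Equiv.Perm.subtypeEquivSubtypePerm fun i : Fin n => l ≤ (i : ℕ))]
  simp only [not_le]

namespace SPartition

variable (mu : SPartition)

theorem strictAntiOn_parts : StrictAntiOn mu.parts (Set.Iio mu.l) := fun i hi j hj hij =>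
  strictAntiOn_Iic_of_succ_lt (n := mu.l - 1) (fun m hm => mu.strict m (by omega))
    (Set.mem_Iic.2 (by simp at hi; omega)) (Set.mem_Iic.2 (by simp at hj; omega)) hij

variable {mu} {a : ℕ → ℂ}

theorem a_parts_succ_ne_zero (ha : a 1 = 0)
    (hinj : ∀ i j : ℕ, 0 < i → 0 < j → a i = a j → i = j) {i : ℕ} (hi : i < mu.l) :
    a (mu.parts i + 1) ≠ 0 := by
  intro h
  have := hinj _ 1 (by omega) one_pos (h.trans ha.symm)
  have := mu.pos i hi
  omega

theorem injOn_a_parts_succ (hinj : ∀ i j : ℕ, 0 < i → 0 < j → a i = a j → i = j) :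
    Set.InjOn (fun i => a (mu.parts i + 1)) (Set.Iio mu.l) := fun i hi j hj h =>
  mu.strictAntiOn_parts.injOn hi hj (by simpa using hinj _ _ (by omega) (by omega) h)

end SPartition

section Products

variable {L : Type*} [Field L] {n : ℕ}

def ratioPairs (n l : ℕ) : Finset (Fin n × Fin n) :=
  Finset.univ.filter (fun p : Fin n × Fin n => (p.1 : ℕ) < l ∧ p.1 < p.2)

def pairRatios (l : ℕ) (y : Fin n → L) : L :=
  ∏ p ∈ ratioPairs n l, (y p.1 + y p.2) / (y p.1 - y p.2)

def factorialPows (mu : SPartition) (hm : mu.l ≤ n) (c : ℕ → L) (y : Fin n → L) : L :=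
  ∏ i : Fin mu.l, ∏ k ∈ range (mu.parts i), (y (Fin.castLE hm i) - c (k + 1))

/-- `(n - ℓ(μ))! • P_{μ;a|n}(x)`, with the parameters `a` embedded in `L` as `c`. -/
def pmultiSum (mu : SPartition) (hm : mu.l ≤ n) (c : ℕ → L) (x : Fin n → L) : L :=
  ∑ ω : Equiv.Perm (Fin n),
    factorialPows mu hm c (fun i => x (ω i)) * pairRatios mu.l (fun i => x (ω i))

theorem Pmulti_eq_pmultiSum {mu : SPartition} (a : ℕ → ℂ) (hm : mu.l ≤ n) :
    Pmulti mu a n = Cv ((n - mu.l).factorial : ℂ)⁻¹ * pmultiSum mu hm (fun k => Cv (a k)) Xv := by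
  rw [Pmulti, dif_pos hm, pmultiSum]
  rfl

variable {R F : Type*} [CommRing R] [Field F] {Q : Type*} [Field Q] [Algebra R Q] {ψ : R →+* F}

theorem factorialPows_mem_specializationSubring {mu : SPartition} (hm : mu.l ≤ n) (c : ℕ → R)
    (y : Fin n → R) :
    (factorialPows mu hm (fun k => algebraMap R Q (c k)) (fun i => algebraMap R Q (y i)),
      factorialPows mu hm (fun k => ψ (c k)) (fun i => ψ (y i))) ∈ specializationSubring Q ψ := by
  simp only [factorialPows, prod_mk_prod, ← map_sub]
  exact prod_mem fun i _ => prod_mem fun k _ => algebraMap_mem_specializationSubring _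

theorem pairRatios_mem_specializationSubring [IsFractionRing R Q] (l : ℕ) (y : Fin n → R)
    (hy : ∀ p ∈ ratioPairs n l, ψ (y p.1) ≠ ψ (y p.2)) :
    (pairRatios l (fun i => algebraMap R Q (y i)), pairRatios l (fun i => ψ (y i))) ∈
      specializationSubring Q ψ := by
  simp only [pairRatios, prod_mk_prod, ← map_add, ← map_sub]
  exact prod_mem fun p hp => div_mem_specializationSubring
    (algebraMap_mem_specializationSubring _) (algebraMap_mem_specializationSubring _)
    (by simpa [sub_eq_zero] using hy p hp)

end Products

section EvaluationPoint

variable {mu : SPartition} {a : ℕ → ℂ} {n : ℕ}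

theorem xpt_of_lt {i : Fin n} (hi : (i : ℕ) < mu.l) : xpt mu a n i = a (mu.parts i + 1) :=
  if_pos hi

theorem xpt_of_le {i : Fin n} (hi : mu.l ≤ (i : ℕ)) : xpt mu a n i = 0 :=
  if_neg (not_lt.2 hi)

theorem xpt_ne_xpt (ha : a 1 = 0) (hinj : ∀ i j : ℕ, 0 < i → 0 < j → a i = a j → i = j)
    {u v : Fin n} (huv : u ≠ v) (hlow : (u : ℕ) < mu.l ∨ (v : ℕ) < mu.l) :
    xpt mu a n u ≠ xpt mu a n v := by
  have hval : (u : ℕ) ≠ v := Fin.val_ne_of_ne huv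
  rcases lt_or_ge (u : ℕ) mu.l with hu | hu <;> rcases lt_or_ge (v : ℕ) mu.l with hv | hv
  · rw [xpt_of_lt hu, xpt_of_lt hv]
    exact fun h => hval (SPartition.injOn_a_parts_succ hinj hu hv h)
  · rw [xpt_of_lt hu, xpt_of_le hv]
    exact SPartition.a_parts_succ_ne_zero ha hinj hu
  · rw [xpt_of_le hu, xpt_of_lt hv]
    exact (SPartition.a_parts_succ_ne_zero ha hinj hv).symm
  · omega

theorem xpt_comp_perm {ω : Equiv.Perm (Fin n)} (hω : ∀ i : Fin n, (i : ℕ) < mu.l → ω i = i) :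
    xpt mu a n ∘ ω = xpt mu a n := by
  ext i
  rcases lt_or_ge (i : ℕ) mu.l with hi | hi
  · simp [hω i hi]
  · have : mu.l ≤ (ω i : ℕ) := by
      by_contra h
      exact (not_lt.2 hi) (ω.injective (hω _ (not_le.1 h)) ▸ not_le.1 h)
    simp [xpt_of_le hi, xpt_of_le this]

theorem forall_apply_eq_self_of_factorialPows_ne_zero (ha : a 1 = 0) (hm : mu.l ≤ n)
    {ω : Equiv.Perm (Fin n)} (h : factorialPows mu hm a (xpt mu a n ∘ ω) ≠ 0) :
    ∀ i : Fin n, (i : ℕ) < mu.l → ω i = i := by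
  have hfac : ∀ i : Fin mu.l, ∀ k < mu.parts i, xpt mu a n (ω (Fin.castLE hm i)) ≠ a (k + 1) := by
    simpa only [factorialPows, prod_ne_zero_iff, mem_univ, mem_range, sub_ne_zero,
      Function.comp_apply, forall_const] using h
  have hle : ∀ i : Fin n, (i : ℕ) < mu.l → ω i ≤ i := by
    intro i hi
    have hi' := hfac ⟨i, hi⟩
    simp only [Fin.castLE_mk, Fin.eta] at hi'
    -- the factor `k = 0` rules out `ω i ≥ ℓ(μ)`, the factor `k = μ_{ω i}` rules out `ω i > i`
    have hlow : (ω i : ℕ) < mu.l := by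
      by_contra hh
      exact hi' 0 (mu.pos i hi) (by rw [xpt_of_le (not_lt.1 hh), ha])
    have hparts : mu.parts i ≤ mu.parts (ω i) := by
      by_contra hh
      exact hi' _ (not_le.1 hh) (xpt_of_lt hlow)
    exact Fin.le_iff_val_le_val.2 ((mu.strictAntiOn_parts.le_iff_ge hi hlow).1 hparts)
  intro i hi
  exact ω.apply_eq_self_of_forall_apply_le fun j hj => hle j (lt_of_le_of_lt hj hi)

theorem factorialPows_xpt (hm : mu.l ≤ n) :
    factorialPows mu hm a (xpt mu a n) =
      ∏ k ∈ range mu.l, ∏ j ∈ range (mu.parts k), (a (mu.parts k + 1) - a (j + 1)) := by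
  rw [factorialPows, ← Fin.prod_univ_eq_prod_range
    (fun k => ∏ j ∈ range (mu.parts k), (a (mu.parts k + 1) - a (j + 1)))]
  refine prod_congr rfl fun i _ => ?_
  rw [xpt_of_lt (by simp)]
  rfl

theorem pairRatios_xpt (ha : a 1 = 0)
    (hinj : ∀ i j : ℕ, 0 < i → 0 < j → a i = a j → i = j) (hm : mu.l ≤ n) :
    pairRatios mu.l (xpt mu a n) =
      ∏ p ∈ (range mu.l ×ˢ range mu.l).filter (fun p => p.1 < p.2),
        (a (mu.parts p.1 + 1) + a (mu.parts p.2 + 1)) /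
          (a (mu.parts p.1 + 1) - a (mu.parts p.2 + 1)) := by
  rw [pairRatios,
    ← prod_filter_mul_prod_filter_not (ratioPairs n mu.l) (fun p => (p.2 : ℕ) < mu.l)]
  have hhigh : ∏ p ∈ (ratioPairs n mu.l).filter (fun p => ¬ (p.2 : ℕ) < mu.l),
      (xpt mu a n p.1 + xpt mu a n p.2) / (xpt mu a n p.1 - xpt mu a n p.2) = 1 := by
    refine prod_eq_one fun p hp => ?_
    simp only [ratioPairs, mem_filter, mem_univ, true_and, not_lt] at hp
    rw [xpt_of_le hp.2, add_zero, sub_zero,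
      div_self (xpt_of_lt hp.1.1 ▸ SPartition.a_parts_succ_ne_zero ha hinj hp.1.1)]
  rw [hhigh, mul_one]
  refine prod_nbij (fun p => ((p.1 : ℕ), (p.2 : ℕ))) ?_ ?_ ?_ ?_
  · intro p hp
    simp only [ratioPairs, mem_filter, mem_univ, true_and] at hp
    simpa [hp.1.1, hp.2] using hp.1.2
  · intro p _ q _ h
    simp only [Prod.mk.injEq] at h
    exact Prod.ext (Fin.ext h.1) (Fin.ext h.2)
  · intro p hp
    simp only [coe_filter, mem_product, mem_range, Set.mem_ofPred_eq] at hp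
    refine ⟨(⟨p.1, by omega⟩, ⟨p.2, by omega⟩), ?_, rfl⟩
    simp only [ratioPairs, coe_filter, mem_filter, mem_univ, true_and]
    exact ⟨⟨hp.1.1, hp.2⟩, hp.1.2⟩
  · intro p hp
    simp only [ratioPairs, mem_filter, mem_univ, true_and] at hp
    rw [xpt_of_lt hp.1.1, xpt_of_lt hp.2]

theorem factorialPows_mul_pairRatios_xpt (ha : a 1 = 0)
    (hinj : ∀ i j : ℕ, 0 < i → 0 < j → a i = a j → i = j) (hm : mu.l ≤ n) :
    factorialPows mu hm a (xpt mu a n) * pairRatios mu.l (xpt mu a n) = Ha a mu := by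
  rw [factorialPows_xpt, pairRatios_xpt ha hinj hm, Ha]

end EvaluationPoint

section Curve

variable {mu : SPartition} {a : ℕ → ℂ} {n : ℕ}

local notation "ι" => algebraMap ℂ[X] (FractionRing ℂ[X])

local notation "ev₀" => Polynomial.evalRingHom (0 : ℂ)

variable (mu a n) in
def xptCurve (i : Fin n) : ℂ[X] :=
  if (i : ℕ) < mu.l then Polynomial.C (a (mu.parts i + 1))
  else Polynomial.C ((i : ℕ) + 1 : ℂ) * Polynomial.X

theorem eval_zero_xptCurve (i : Fin n) : (xptCurve mu a n i).eval 0 = xpt mu a n i := by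
  unfold xptCurve xpt
  split_ifs <;> simp

theorem eval_zero_aeval_xptCurve (p : MvPolynomial (Fin n) ℂ) :
    (MvPolynomial.aeval (xptCurve mu a n) p).eval 0 = MvPolynomial.eval (xpt mu a n) p := by
  have := congrArg (· p)
    (MvPolynomial.comp_aeval (xptCurve mu a n) (Polynomial.aeval (R := ℂ) (0 : ℂ)))
  simpa [Polynomial.coeff_zero_eq_eval_zero, eval_zero_xptCurve,
    MvPolynomial.coe_aeval_eq_eval] using this

theorem xptCurve_injective (ha : a 1 = 0)
    (hinj : ∀ i j : ℕ, 0 < i → 0 < j → a i = a j → i = j) :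
    Function.Injective (xptCurve mu a n) := by
  intro u v huv
  by_contra hne
  by_cases hlow : (u : ℕ) < mu.l ∨ (v : ℕ) < mu.l
  · exact xpt_ne_xpt ha hinj hne hlow (by rw [← eval_zero_xptCurve, huv, eval_zero_xptCurve])
  · simp only [not_or, not_lt] at hlow
    have h1 := congrArg (Polynomial.eval 1) huv
    simp only [xptCurve, if_neg (not_lt.2 hlow.1), if_neg (not_lt.2 hlow.2), Polynomial.eval_mul,
      Polynomial.eval_C, Polynomial.eval_X, mul_one, add_left_inj, Nat.cast_inj] at h1
    exact hne (Fin.ext h1)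

theorem Pmulti_mem_specializationSubring_xptCurve (ha : a 1 = 0)
    (hinj : ∀ i j : ℕ, 0 < i → 0 < j → a i = a j → i = j) (hm : mu.l ≤ n) :
    (Pmulti mu a n, ι (Polynomial.C ((n - mu.l).factorial : ℂ)⁻¹) *
        pmultiSum mu hm (fun k => ι (Polynomial.C (a k))) (fun i => ι (xptCurve mu a n i))) ∈
      specializationSubring (K n)
        ((ι).comp (MvPolynomial.aeval (R := ℂ) (xptCurve mu a n)).toRingHom) := by
  set ψ := (ι).comp (MvPolynomial.aeval (R := ℂ) (xptCurve mu a n)).toRingHom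
  have hC (c : ℂ) : ψ (MvPolynomial.C c) = ι (Polynomial.C c) := by simp [ψ]
  have hX (i : Fin n) : ψ (MvPolynomial.X i) = ι (xptCurve mu a n i) := by simp [ψ]
  rw [Pmulti_eq_pmultiSum a hm, ← hC, ← Prod.mk_mul_mk, pmultiSum, pmultiSum, prod_mk_sum]
  refine mul_mem (algebraMap_mem_specializationSubring _) (sum_mem fun ω _ => ?_)
  have hω := mul_mem
    (factorialPows_mem_specializationSubring (Q := K n) hm (fun k => MvPolynomial.C (a k))
      (fun i => MvPolynomial.X (ω i)))
    (pairRatios_mem_specializationSubring (ψ := ψ) mu.l (fun i => MvPolynomial.X (ω i))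
      fun p hp => by
        simp only [ratioPairs, mem_filter] at hp
        rw [hX, hX]
        exact (IsFractionRing.injective ℂ[X] (FractionRing ℂ[X])).ne
          ((xptCurve_injective ha hinj).ne (ω.injective.ne hp.2.2.ne)))
  simp only [hC, hX] at hω
  exact hω

theorem exists_pairRatios_xptCurve_mem_specializationSubring (ha : a 1 = 0)
    (hinj : ∀ i j : ℕ, 0 < i → 0 < j → a i = a j → i = j) (ω : Equiv.Perm (Fin n)) :
    ∃ w, (pairRatios mu.l (fun i => ι (xptCurve mu a n (ω i))), w) ∈
      specializationSubring (FractionRing ℂ[X]) ev₀ := by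
  refine exists_prod_mem_specializationSubring fun p hp => ?_
  simp only [ratioPairs, mem_filter] at hp
  have huv : ω p.1 ≠ ω p.2 := ω.injective.ne hp.2.2.ne
  simp only [← map_add, ← map_sub]
  by_cases hlow : (ω p.1 : ℕ) < mu.l ∨ (ω p.2 : ℕ) < mu.l
  · refine ⟨_, div_mem_specializationSubring (algebraMap_mem_specializationSubring _)
      (algebraMap_mem_specializationSubring _) ?_⟩
    simpa [eval_zero_xptCurve, sub_eq_zero] using xpt_ne_xpt ha hinj huv hlow
  · simp only [not_or, not_lt] at hlow
    have hX : ι Polynomial.X ≠ 0 := by simp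
    simp only [xptCurve, if_neg (not_lt.2 hlow.1), if_neg (not_lt.2 hlow.2), ← add_mul,
      ← sub_mul, map_mul, mul_div_mul_right _ _ hX, ← Polynomial.C_add, ← Polynomial.C_sub]
    refine ⟨_, div_mem_specializationSubring (algebraMap_mem_specializationSubring _)
      (algebraMap_mem_specializationSubring _) ?_⟩
    simpa [sub_eq_zero] using Fin.val_ne_of_ne huv

theorem summand_xptCurve_mem_specializationSubring (ha : a 1 = 0)
    (hinj : ∀ i j : ℕ, 0 < i → 0 < j → a i = a j → i = j) (hm : mu.l ≤ n)
    (ω : Equiv.Perm (Fin n)) :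
    (factorialPows mu hm (fun k => ι (Polynomial.C (a k))) (fun i => ι (xptCurve mu a n (ω i))) *
        pairRatios mu.l (fun i => ι (xptCurve mu a n (ω i))),
      if ∀ i : Fin n, (i : ℕ) < mu.l → ω i = i then Ha a mu else 0) ∈
      specializationSubring (FractionRing ℂ[X]) ev₀ := by
  have hF := factorialPows_mem_specializationSubring (Q := FractionRing ℂ[X]) (ψ := ev₀) hm
    (fun k => Polynomial.C (a k)) (fun i => xptCurve mu a n (ω i))
  simp only [Polynomial.coe_evalRingHom, Polynomial.eval_C, eval_zero_xptCurve] at hF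
  split_ifs with hω
  · have hP := pairRatios_mem_specializationSubring (Q := FractionRing ℂ[X]) (ψ := ev₀) mu.l
      (fun i => xptCurve mu a n (ω i)) fun p hp => by
        simp only [ratioPairs, mem_filter] at hp
        simpa [eval_zero_xptCurve, hω p.1 hp.2.1] using
          xpt_ne_xpt ha hinj (ω.injective.ne hp.2.2.ne) (Or.inl ((hω p.1 hp.2.1).symm ▸ hp.2.1))
    simp only [Polynomial.coe_evalRingHom, eval_zero_xptCurve] at hP
    have hxpt : (fun i => xpt mu a n (ω i)) = xpt mu a n := xpt_comp_perm hω
    simpa only [Prod.mk_mul_mk, hxpt, factorialPows_mul_pairRatios_xpt ha hinj hm] using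
      mul_mem hF hP
  · obtain ⟨w, hw⟩ := exists_pairRatios_xptCurve_mem_specializationSubring ha hinj ω
    have h0 : factorialPows mu hm a (fun i => xpt mu a n (ω i)) = 0 := by
      by_contra h
      exact hω (forall_apply_eq_self_of_factorialPows_ne_zero ha hm h)
    simpa [h0] using mul_mem hF hw

theorem pmultiSum_xptCurve_mem_specializationSubring (ha : a 1 = 0)
    (hinj : ∀ i j : ℕ, 0 < i → 0 < j → a i = a j → i = j) (hm : mu.l ≤ n) :
    (pmultiSum mu hm (fun k => ι (Polynomial.C (a k))) (fun i => ι (xptCurve mu a n i)),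
      (n - mu.l).factorial * Ha a mu) ∈ specializationSubring (FractionRing ℂ[X]) ev₀ := by
  have hcount : ∑ ω : Equiv.Perm (Fin n),
      (if ∀ i : Fin n, (i : ℕ) < mu.l → ω i = i then Ha a mu else 0) =
      (n - mu.l).factorial * Ha a mu := by
    rw [← sum_filter, sum_const, card_perm_fixing_lt, nsmul_eq_mul]
  rw [← hcount, pmultiSum, prod_mk_sum]
  exact sum_mem fun ω _ => summand_xptCurve_mem_specializationSubring ha hinj hm ω

end Curve

/-- Vanishing property (part b): `P_{μ;a}(x(μ)) = H_a(μ)` when the `a_j` are pairwise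
distinct and `a_1 = 0`.  (Evaluation is performed on a polynomial representative of the
rational function `P_{μ;a|n}`.) -/
theorem Pmulti_eval_self
    (a : ℕ → ℂ) (ha : a 1 = 0)
    (hinj : ∀ i j : ℕ, 0 < i → 0 < j → a i = a j → i = j)
    (mu : SPartition) (n : ℕ) (hm : mu.l ≤ n)
    (p : MvPolynomial (Fin n) ℂ)
    (hp : algebraMap (MvPolynomial (Fin n) ℂ) (K n) p = Pmulti mu a n) :
    MvPolynomial.eval (xpt mu a n) p = Ha a mu := by
  have hcurve := eq_of_algebraMap_mem_specializationSubring
    (hp ▸ Pmulti_mem_specializationSubring_xptCurve ha hinj hm)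
  have hzero := mul_mem
    (algebraMap_mem_specializationSubring (Polynomial.C ((n - mu.l).factorial : ℂ)⁻¹))
    (pmultiSum_xptCurve_mem_specializationSubring ha hinj hm)
  rw [Prod.mk_mul_mk, hcurve] at hzero
  have hHa := eq_of_algebraMap_mem_specializationSubring hzero
  rw [Polynomial.coe_evalRingHom, Polynomial.eval_C,
    inv_mul_cancel_left₀ (Nat.cast_ne_zero.2 (Nat.factorial_ne_zero _))] at hHa
  rw [hHa, ← eval_zero_aeval_xptCurve]
  rfl
end
end

section
/- (Two-row multiparameter relation) Let a = (a_k) with a_1 = 0, and adopt the convention P_{(r,s);a} = −P_{(s,r);a} for r ≤ s, P_{(r,0);a} = P_{(r);a}. For all integers k, l ≥ 1: P_{(k+1,l);a} + P_{(k,l+1);a} + (a_{k+1}+a_{l+1}) P_{(k,l);a} = P_{(k);a} P_{(l+1);a} − P_{(k+1);a} P_{(l);a} + (a_{l+1} − a_{k+1}) P_{(k);a} P_{(l);a}. -/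
noncomputable section

/-- The one-row multiparameter Schur P-polynomial `P_{(r);a|n}` (zero if `n = 0`). -/
def Prow (a : ℕ → ℂ) (r n : ℕ) : K n :=
  if h : 1 ≤ n then
    Cv (((n - 1).factorial : ℂ))⁻¹ *
      ∑ ω : Equiv.Perm (Fin n),
        (∏ k ∈ Finset.range r, (Xv (ω ⟨0, h⟩) - Cv (a (k + 1)))) *
          ratioProd 1 (fun j => Xv (ω j))
  else 0

/-- The two-row multiparameter Schur P-polynomial `P_{(r,s);a|n}` for `r > s ≥ 1`
(zero if `n < 2`). -/
def Ptwo (a : ℕ → ℂ) (r s n : ℕ) : K n :=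
  if h : 2 ≤ n then
    Cv (((n - 2).factorial : ℂ))⁻¹ *
      ∑ ω : Equiv.Perm (Fin n),
        ((∏ k ∈ Finset.range r, (Xv (ω ⟨0, by omega⟩) - Cv (a (k + 1)))) *
            ∏ k ∈ Finset.range s, (Xv (ω ⟨1, h⟩) - Cv (a (k + 1)))) *
          ratioProd 2 (fun j => Xv (ω j))
  else 0

/-- `P_{(r,s);a}` with the convention `P_{(r,s);a} = −P_{(s,r);a}` for `r ≤ s`
(so in particular `P_{(r,r);a} = 0`), for `r, s ≥ 1`. -/
def P2s (a : ℕ → ℂ) (r s n : ℕ) : K n :=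
  if r > s then Ptwo a r s n else if s > r then -Ptwo a s r n else 0

-- AUX PART (to be inserted after the given defs)
set_option synthInstance.maxHeartbeats 1000000
set_option maxHeartbeats 2000000

open Finset

namespace PmultiAux

lemma Cv_mul {n : ℕ} (x y : ℂ) : (Cv (x*y) : K n) = Cv x * Cv y := by
  simp [Cv, map_mul]

lemma Cv_add {n : ℕ} (x y : ℂ) : (Cv (x+y) : K n) = Cv x + Cv y := by
  simp [Cv, map_add]

lemma Cv_sub {n : ℕ} (x y : ℂ) : (Cv (x-y) : K n) = Cv x - Cv y := by
  simp [Cv, map_sub]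

lemma Cv_one {n : ℕ} : (Cv 1 : K n) = 1 := by simp [Cv, map_one]

lemma Cv_natCast {n m : ℕ} : (Cv (m : ℂ) : K n) = (m : K n) := by
  simp [Cv, map_natCast]

lemma algebraMap_inj {n : ℕ} :
    Function.Injective (algebraMap (MvPolynomial (Fin n) ℂ) (K n)) :=
  IsFractionRing.injective _ _

instance {n : ℕ} : CharZero (K n) := charZero_of_injective_algebraMap algebraMap_inj

lemma Xv_injective {n : ℕ} : Function.Injective (Xv (n := n)) := by
  intro i j h
  exact MvPolynomial.X_injective (algebraMap_inj h)

lemma Xv_sub_ne_zero {n : ℕ} {i j : Fin n} (h : i ≠ j) : Xv i - Xv j ≠ 0 := by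
  rw [sub_ne_zero]
  exact fun hc => h (Xv_injective hc)

/-- the ratio factor -/
def g {n : ℕ} (i j : Fin n) : K n := (Xv i + Xv j) / (Xv i - Xv j)

def A {n : ℕ} (i : Fin n) : K n := ∏ j ∈ univ.erase i, g i j

def B {n : ℕ} (i j : Fin n) : K n :=
  g i j * (∏ m ∈ (univ.erase i).erase j, g i m) * ∏ m ∈ (univ.erase i).erase j, g j m

lemma g_self {n : ℕ} (i : Fin n) : g i i = 0 := by
  simp [g, sub_self]

lemma B_self {n : ℕ} (i : Fin n) : B i i = 0 := by
  simp [B, g_self]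

lemma gsymm_aux {F : Type*} [Field F] (x y : F) : (y + x)/(y - x) = -((x + y)/(x - y)) := by
  rcases eq_or_ne x y with rfl | h
  · simp
  · have h1 : x - y ≠ 0 := sub_ne_zero.mpr h
    have h2 : y - x ≠ 0 := sub_ne_zero.mpr (Ne.symm h)
    field_simp
    ring

lemma g_symm {n : ℕ} (i j : Fin n) : g j i = - g i j := by
  rcases eq_or_ne i j with rfl | h
  · simp [g_self]
  · rw [g, g]; exact gsymm_aux (Xv i) (Xv j)

lemma erase_erase_comm {n : ℕ} (i j : Fin n) :
    ((univ : Finset (Fin n)).erase i).erase j = (univ.erase j).erase i := by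
  rw [Finset.erase_right_comm]

lemma B_antisymm {n : ℕ} (i j : Fin n) : B j i = - B i j := by
  rcases eq_or_ne i j with rfl | h
  · simp [B_self]
  · rw [B, B, g_symm i j, erase_erase_comm j i]
    ring

/-- The key pointwise identity. -/
lemma key_identity {n : ℕ} (p q : Fin n) :
    (Xv p + Xv q) * B p q = (Xv q - Xv p) * (A p * A q) := by
  rcases eq_or_ne p q with rfl | h
  · simp [B_self]
  · have hq : q ∈ univ.erase p := by simp [h.symm]
    have hp : p ∈ univ.erase q := by simp [h]
    have hA : A p = g p q * ∏ m ∈ (univ.erase p).erase q, g p m :=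
      (Finset.mul_prod_erase _ _ hq).symm
    have hA' : A q = g q p * ∏ m ∈ (univ.erase q).erase p, g q m :=
      (Finset.mul_prod_erase _ _ hp).symm
    rw [B, hA, hA', erase_erase_comm q p]
    set X := ∏ m ∈ (univ.erase p).erase q, g p m
    set Y := ∏ m ∈ (univ.erase p).erase q, g q m
    have hpq : Xv p - Xv q ≠ 0 := Xv_sub_ne_zero h
    have hqp : Xv q - Xv p ≠ 0 := Xv_sub_ne_zero h.symm
    rw [g, g]
    field_simp
    ring

/-- Sum over permutations of a function of `ω 0`. -/
lemma sum_perm_one {M : Type*} [AddCommMonoid M] {m : ℕ} (G : Fin (m+1) → M) :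
    ∑ ω : Equiv.Perm (Fin (m+1)), G (ω 0) = m.factorial • ∑ p, G p := by
  rw [← Equiv.sum_comp (Equiv.Perm.decomposeFin (n := m)).symm
    (fun ω => G (ω 0))]
  rw [Fintype.sum_prod_type]
  simp only [Equiv.Perm.decomposeFin_symm_apply_zero, Finset.sum_const,
    Finset.card_univ, Fintype.card_perm, Fintype.card_fin]
  rw [Finset.smul_sum]

/-- Sum over permutations of a function of `ω 0` and `ω 1`. -/
lemma sum_perm_two {M : Type*} [AddCommGroup M] {m : ℕ} (F : Fin (m+2) → Fin (m+2) → M) :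
    ∑ ω : Equiv.Perm (Fin (m+2)), F (ω 0) (ω 1)
      = m.factorial • ((∑ p, ∑ q, F p q) - ∑ p, F p p) := by
  rw [← Equiv.sum_comp (Equiv.Perm.decomposeFin (n := m+1)).symm
    (fun ω => F (ω 0) (ω 1))]
  rw [Fintype.sum_prod_type]
  have h1 : ∀ (p : Fin (m+2)) (σ : Equiv.Perm (Fin (m+1))),
      (Equiv.Perm.decomposeFin.symm (p, σ)) 1 = Equiv.swap 0 p ((σ 0).succ) := by
    intro p σ
    have := Equiv.Perm.decomposeFin_symm_apply_succ σ p 0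
    simpa using this
  calc ∑ p, ∑ σ : Equiv.Perm (Fin (m+1)), F ((Equiv.Perm.decomposeFin.symm (p, σ)) 0)
          ((Equiv.Perm.decomposeFin.symm (p, σ)) 1)
      = ∑ p, ∑ σ : Equiv.Perm (Fin (m+1)), F p (Equiv.swap 0 p ((σ 0).succ)) := by
        refine Finset.sum_congr rfl fun p _ => Finset.sum_congr rfl fun σ _ => ?_
        rw [Equiv.Perm.decomposeFin_symm_apply_zero, h1]
    _ = ∑ p, m.factorial • ∑ q : Fin (m+1), F p (Equiv.swap 0 p q.succ) := by
        refine Finset.sum_congr rfl fun p _ => ?_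
        exact sum_perm_one (fun q => F p (Equiv.swap 0 p q.succ))
    _ = ∑ p, m.factorial • ((∑ q, F p q) - F p p) := by
        refine Finset.sum_congr rfl fun p _ => ?_
        congr 1
        have h2 : ∑ x : Fin (m+2), F p (Equiv.swap 0 p x)
            = F p (Equiv.swap 0 p 0) + ∑ q : Fin (m+1), F p (Equiv.swap 0 p q.succ) :=
          Fin.sum_univ_succ (fun x => F p (Equiv.swap 0 p x))
        have h3 : ∑ x : Fin (m+2), F p (Equiv.swap 0 p x) = ∑ x, F p x :=
          Equiv.sum_comp (Equiv.swap 0 p) (F p)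
        rw [Equiv.swap_apply_left] at h2
        rw [h3] at h2
        rw [eq_sub_iff_add_eq, add_comm, ← h2]
    _ = m.factorial • ((∑ p, ∑ q, F p q) - ∑ p, F p p) := by
        rw [← Finset.smul_sum, Finset.sum_sub_distrib]

lemma image_erase_univ {n : ℕ} (ω : Equiv.Perm (Fin n)) (x : Fin n) :
    (univ.erase x).image ω = univ.erase (ω x) := by
  rw [Finset.image_erase ω.injective]
  congr 1
  ext mm
  simp only [Finset.mem_image, Finset.mem_univ, iff_true, true_and]
  exact ⟨ω.symm mm, by simp⟩

lemma pair_filter_one {m : ℕ} :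
    (univ.filter (fun p : Fin (m+1) × Fin (m+1) => (p.1 : ℕ) < 1 ∧ p.1 < p.2))
      = ({0} : Finset (Fin (m+1))) ×ˢ (univ.erase 0) := by
  ext p
  simp only [Finset.mem_filter, Finset.mem_univ, true_and, Finset.mem_product,
    Finset.mem_singleton, Finset.mem_erase, and_true]
  simp only [Fin.lt_def, ne_eq, Fin.ext_iff, Fin.val_zero]
  omega

lemma pair_filter_two {m : ℕ} :
    (univ.filter (fun p : Fin (m+2) × Fin (m+2) => (p.1 : ℕ) < 2 ∧ p.1 < p.2))
      = (({0} : Finset (Fin (m+2))) ×ˢ (univ.erase 0))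
        ∪ (({1} : Finset (Fin (m+2))) ×ˢ ((univ.erase 0).erase 1)) := by
  ext p
  simp only [Finset.mem_filter, Finset.mem_univ, true_and, Finset.mem_union,
    Finset.mem_product, Finset.mem_singleton, Finset.mem_erase, and_true]
  simp only [Fin.lt_def, ne_eq, Fin.ext_iff, Fin.val_zero, Fin.val_one]
  omega

lemma prod_singleton_product {α M : Type*} [DecidableEq α] [CommMonoid M]
    (a : α) (t : Finset α) (f : α × α → M) :
    ∏ p ∈ ({a} : Finset α) ×ˢ t, f p = ∏ j ∈ t, f (a, j) := by
  rw [Finset.prod_product, Finset.prod_singleton]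

lemma ratio_one {m : ℕ} (ω : Equiv.Perm (Fin (m+1))) :
    ratioProd 1 (fun j => Xv (ω j)) = A (ω 0) := by
  rw [ratioProd, pair_filter_one, prod_singleton_product]
  have h : ∀ j : Fin (m+1), (Xv (ω 0) + Xv (ω j)) / (Xv (ω 0) - Xv (ω j)) = g (ω 0) (ω j) :=
    fun j => rfl
  calc ∏ j ∈ univ.erase 0, (Xv (ω 0) + Xv (ω j)) / (Xv (ω 0) - Xv (ω j))
      = ∏ j ∈ univ.erase 0, g (ω 0) (ω j) := Finset.prod_congr rfl (fun j _ => h j)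
    _ = ∏ mm ∈ (univ.erase 0).image ω, g (ω 0) mm :=
        (Finset.prod_image (fun x _ y _ hxy => ω.injective hxy)).symm
    _ = A (ω 0) := by rw [image_erase_univ]; rfl

lemma ratio_two {m : ℕ} (ω : Equiv.Perm (Fin (m+2))) :
    ratioProd 2 (fun j => Xv (ω j)) = B (ω 0) (ω 1) := by
  rw [ratioProd, pair_filter_two, Finset.prod_union, prod_singleton_product,
    prod_singleton_product]
  · have h01 : (ω 1) ∈ univ.erase (ω 0) := by
      simp only [Finset.mem_erase, Finset.mem_univ, and_true]
      exact fun hc => (by simp : (1 : Fin (m+2)) ≠ 0) (ω.injective hc)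
    calc (∏ j ∈ univ.erase 0, (Xv (ω 0) + Xv (ω j)) / (Xv (ω 0) - Xv (ω j))) *
          ∏ j ∈ (univ.erase 0).erase 1, (Xv (ω 1) + Xv (ω j)) / (Xv (ω 1) - Xv (ω j))
        = (∏ j ∈ univ.erase 0, g (ω 0) (ω j)) * ∏ j ∈ (univ.erase 0).erase 1, g (ω 1) (ω j) := rfl
      _ = (∏ mm ∈ (univ.erase 0).image ω, g (ω 0) mm) *
            ∏ mm ∈ ((univ.erase 0).erase 1).image ω, g (ω 1) mm := by
          rw [Finset.prod_image (fun x _ y _ hxy => ω.injective hxy),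
            Finset.prod_image (fun x _ y _ hxy => ω.injective hxy)]
      _ = (∏ mm ∈ univ.erase (ω 0), g (ω 0) mm) *
            ∏ mm ∈ (univ.erase (ω 0)).erase (ω 1), g (ω 1) mm := by
          rw [image_erase_univ, Finset.image_erase ω.injective, image_erase_univ]
      _ = B (ω 0) (ω 1) := by
          rw [B, ← Finset.mul_prod_erase _ _ h01]
  · rw [Finset.disjoint_left]
    rintro p hp hq
    rw [Finset.mem_product, Finset.mem_singleton] at hp hq
    have : (0 : Fin (m+2)) = 1 := hp.1.symm.trans hq.1
    simp at this

/-- the one-row numerator -/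
def fR (a : ℕ → ℂ) (r : ℕ) {n : ℕ} (p : Fin n) : K n :=
  ∏ k ∈ Finset.range r, (Xv p - Cv (a (k + 1)))

lemma fR_succ (a : ℕ → ℂ) (r : ℕ) {n : ℕ} (p : Fin n) :
    fR a (r+1) p = fR a r p * (Xv p - Cv (a (r + 1))) := by
  rw [fR, fR, Finset.prod_range_succ]

lemma const_cancel {n : ℕ} (m : ℕ) (S : K n) :
    Cv ((m.factorial : ℂ))⁻¹ * (m.factorial • S) = S := by
  have hne : ((m.factorial : ℕ) : ℂ) ≠ 0 := by
    exact_mod_cast m.factorial_ne_zero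
  rw [nsmul_eq_mul, ← Cv_natCast, ← mul_assoc, ← Cv_mul, inv_mul_cancel₀ hne, Cv_one, one_mul]

lemma Prow_eq (a : ℕ → ℂ) (r m : ℕ) :
    Prow a r (m+1) = ∑ p, fR a r p * A p := by
  rw [Prow, dif_pos (by omega : 1 ≤ m + 1)]
  have : ∀ ω : Equiv.Perm (Fin (m+1)),
      (∏ k ∈ Finset.range r, (Xv (ω ⟨0, by omega⟩) - Cv (a (k + 1)))) *
        ratioProd 1 (fun j => Xv (ω j))
      = fR a r (ω 0) * A (ω 0) := by
    intro ω
    simp only [Fin.mk_zero]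
    rw [ratio_one, fR]
  rw [Finset.sum_congr rfl (fun ω _ => this ω)]
  rw [sum_perm_one (fun p => fR a r p * A p)]
  exact const_cancel m (∑ p, fR a r p * A p)

lemma Ptwo_eq (a : ℕ → ℂ) (r s m : ℕ) :
    Ptwo a r s (m+2) = ∑ p, ∑ q, (fR a r p * fR a s q) * B p q := by
  rw [Ptwo, dif_pos (by omega : 2 ≤ m + 2)]
  have : ∀ ω : Equiv.Perm (Fin (m+2)),
      ((∏ k ∈ Finset.range r, (Xv (ω ⟨0, by omega⟩) - Cv (a (k + 1)))) *
          ∏ k ∈ Finset.range s, (Xv (ω ⟨1, by omega⟩) - Cv (a (k + 1)))) *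
        ratioProd 2 (fun j => Xv (ω j))
      = (fR a r (ω 0) * fR a s (ω 1)) * B (ω 0) (ω 1) := by
    intro ω
    simp only [Fin.mk_zero, Fin.mk_one]
    rw [ratio_two, fR, fR]
  rw [Finset.sum_congr rfl (fun ω _ => this ω)]
  rw [sum_perm_two (fun p q => (fR a r p * fR a s q) * B p q)]
  have hd : (∑ p : Fin (m+2), (fR a r p * fR a s p) * B p p) = 0 := by
    refine Finset.sum_eq_zero fun p _ => ?_
    rw [B_self, mul_zero]
  rw [hd, sub_zero]
  exact const_cancel m (∑ p, ∑ q, (fR a r p * fR a s q) * B p q)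

lemma double_antisym {n : ℕ} (u v : Fin n → K n) :
    ∑ p, ∑ q, (u p * v q) * B p q = - ∑ p, ∑ q, (v p * u q) * B p q := by
  calc ∑ p, ∑ q, (u p * v q) * B p q
      = ∑ q, ∑ p, (u p * v q) * B p q := Finset.sum_comm
    _ = ∑ q, ∑ p, -((v q * u p) * B q p) := by
        refine Finset.sum_congr rfl fun q _ => Finset.sum_congr rfl fun p _ => ?_
        rw [B_antisymm q p]
        ring
    _ = - ∑ q, ∑ p, (v q * u p) * B q p := by
        rw [← Finset.sum_neg_distrib]
        refine Finset.sum_congr rfl fun q _ => ?_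
        rw [Finset.sum_neg_distrib]

lemma P2s_eq (a : ℕ → ℂ) (r s m : ℕ) :
    P2s a r s (m+2) = ∑ p, ∑ q, (fR a r p * fR a s q) * B p q := by
  rcases lt_trichotomy r s with h | h | h
  · rw [P2s, if_neg (by omega), if_pos h, Ptwo_eq,
      double_antisym (fR a s) (fR a r), neg_neg]
  · subst h
    rw [P2s, if_neg (by omega), if_neg (by omega)]
    have hS := double_antisym (n := m+2) (fR a r) (fR a r)
    have h2 : (2 : K (m+2)) * (∑ p, ∑ q, (fR a r p * fR a r q) * B p q) = 0 := by
      linear_combination hS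
    rcases mul_eq_zero.mp h2 with h3 | h3
    · exact absurd h3 two_ne_zero
    · exact h3.symm
  · rw [P2s, if_pos h, Ptwo_eq]

lemma P2s_small (a : ℕ → ℂ) (r s : ℕ) {n : ℕ} (h : n < 2) : P2s a r s n = 0 := by
  have hz : Ptwo a r s n = 0 := by rw [Ptwo, dif_neg (by omega)]
  have hz' : Ptwo a s r n = 0 := by rw [Ptwo, dif_neg (by omega)]
  rw [P2s]
  split_ifs <;> simp [hz, hz']

lemma Prow_zero (a : ℕ → ℂ) (r : ℕ) : Prow a r 0 = 0 := by
  rw [Prow, dif_neg (by omega)]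

end PmultiAux

namespace PmultiAux

lemma case_one (a : ℕ → ℂ) (k l : ℕ) :
    P2s a (k + 1) l 1 + P2s a k (l + 1) 1 + Cv (a (k + 1) + a (l + 1)) * P2s a k l 1
      = Prow a k 1 * Prow a (l + 1) 1 - Prow a (k + 1) 1 * Prow a l 1
        + Cv (a (l + 1) - a (k + 1)) * (Prow a k 1 * Prow a l 1) := by
  rw [P2s_small a _ _ (by omega), P2s_small a _ _ (by omega), P2s_small a _ _ (by omega)]
  have e : ∀ r, Prow a r 1 = fR a r 0 * A 0 :=
    fun r => (Prow_eq a r 0).trans (Fin.sum_univ_one _)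
  rw [e, e, e, e]
  rw [fR_succ, fR_succ, Cv_sub]
  ring

lemma case_main (a : ℕ → ℂ) (k l m : ℕ) :
    P2s a (k + 1) l (m+2) + P2s a k (l + 1) (m+2)
        + Cv (a (k + 1) + a (l + 1)) * P2s a k l (m+2)
      = Prow a k (m+2) * Prow a (l + 1) (m+2) - Prow a (k + 1) (m+2) * Prow a l (m+2)
        + Cv (a (l + 1) - a (k + 1)) * (Prow a k (m+2) * Prow a l (m+2)) := by
  rw [P2s_eq, P2s_eq, P2s_eq]
  rw [show m + 2 = (m+1) + 1 from rfl, Prow_eq, Prow_eq, Prow_eq, Prow_eq]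
  rw [Finset.sum_mul_sum, Finset.sum_mul_sum, Finset.sum_mul_sum]
  simp only [Finset.mul_sum]
  simp only [← Finset.sum_add_distrib, ← Finset.sum_sub_distrib]
  refine Finset.sum_congr rfl fun p _ => Finset.sum_congr rfl fun q _ => ?_
  rw [fR_succ, fR_succ, Cv_add, Cv_sub]
  linear_combination (fR a k p * fR a l q) * key_identity p q

end PmultiAux

/-- Two-row multiparameter relation:
`P_{(k+1,l);a} + P_{(k,l+1);a} + (a_{k+1}+a_{l+1}) P_{(k,l);a}
  = P_{(k);a} P_{(l+1);a} − P_{(k+1);a} P_{(l);a} + (a_{l+1}−a_{k+1}) P_{(k);a} P_{(l);a}`,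
as an identity of supersymmetric functions, i.e. in every number `n` of variables. -/
theorem Pmulti_two_row_relation (a : ℕ → ℂ) (ha : a 1 = 0)
    (k l : ℕ) (hk : 1 ≤ k) (hl : 1 ≤ l) (n : ℕ) :
    P2s a (k + 1) l n + P2s a k (l + 1) n + Cv (a (k + 1) + a (l + 1)) * P2s a k l n
      = Prow a k n * Prow a (l + 1) n - Prow a (k + 1) n * Prow a l n
        + Cv (a (l + 1) - a (k + 1)) * (Prow a k n * Prow a l n) := by
  rcases n with _ | n
  · rw [PmultiAux.P2s_small a _ _ (by omega), PmultiAux.P2s_small a _ _ (by omega),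
      PmultiAux.P2s_small a _ _ (by omega), PmultiAux.Prow_zero, PmultiAux.Prow_zero,
      PmultiAux.Prow_zero, PmultiAux.Prow_zero]
    ring
  rcases n with _ | m
  · exact PmultiAux.case_one a k l
  · exact PmultiAux.case_main a k l m

end
end
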